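/- arXiv:2509.16362 — 9 statements merged into one kernel-verified Lean document; each statement's English description precedes it below -/
import Mathlib

section
/- Let p be a prime, k ≥ 1 an integer, and θ ∈ ℚ_p \ {−1,0,1} with |θ|_p ≤ 1. Then every fixed point of the Ising–Potts mapping f_θ is a p-adic unit: if x ∈ ℚ_p, x ≠ −θ and f_θ(x) = x, then |x|_p = 1. -/
/-- The Ising–Potts mapping `f_θ(x) = ((θx + 1)/(x + θ))^k` on `ℚ_p`. -/
noncomputable def isingPotts (p : ℕ) [Fact p.Prime] (θ : ℚ_[p]) (k : ℕ) (x : ℚ_[p]) : ℚ_[p] :=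
  ((θ * x + 1) / (x + θ)) ^ k

/-- if `p` is prime, `k ≥ 1`, `θ ∈ ℚ_p \ {-1,0,1}` with `|θ|_p ≤ 1`, then every
fixed point of the Ising–Potts mapping `f_θ` is a `p`-adic unit. -/
theorem fixed_points_of_isingPotts_are_units
    (p : ℕ) [Fact p.Prime] (k : ℕ) (hk : 1 ≤ k)
    (θ : ℚ_[p]) (hθ : θ ≠ -1 ∧ θ ≠ 0 ∧ θ ≠ 1) (hθnorm : ‖θ‖ ≤ 1)
    (x : ℚ_[p]) (hx : x ≠ -θ) (hfix : isingPotts p θ k x = x) :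
    ‖x‖ = 1 := by
  have hxθ : x + θ ≠ 0 := fun h => hx (eq_neg_of_add_eq_zero_left h)
  have key : ‖x‖ = (‖θ * x + 1‖ / ‖x + θ‖) ^ k := by
    conv_lhs => rw [← hfix]
    simp [isingPotts, norm_div]
  have hxnn : (0:ℝ) ≤ ‖x‖ := norm_nonneg x
  rcases lt_trichotomy ‖x‖ 1 with h | h | h
  · exfalso
    have h1 : ‖θ * x‖ < 1 := by
      rw [norm_mul]
      calc ‖θ‖ * ‖x‖ ≤ 1 * ‖x‖ := by gcongr
        _ = ‖x‖ := one_mul _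
        _ < 1 := h
    have h2 : ‖θ * x + 1‖ = 1 := by
      rw [Padic.add_eq_max_of_ne (by rw [norm_one]; exact ne_of_lt h1), norm_one]
      exact max_eq_right h1.le
    have h3 : ‖x + θ‖ ≤ 1 := le_trans (Padic.nonarchimedean x θ) (max_le h.le hθnorm)
    have h4 : (0:ℝ) < ‖x + θ‖ := norm_pos_iff.mpr hxθ
    have : (1:ℝ) ≤ ‖x‖ := by
      rw [key, h2]
      calc (1:ℝ) = 1 ^ k := (one_pow k).symm
        _ ≤ (1 / ‖x + θ‖) ^ k := by
            gcongr
            rw [le_div_iff₀ h4, one_mul]; exact h3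
    linarith
  · exact h
  · exfalso
    have hθx : ‖θ‖ < ‖x‖ := lt_of_le_of_lt hθnorm h
    have hx1 : ‖x + θ‖ = ‖x‖ := by
      rw [add_comm, Padic.add_eq_max_of_ne (ne_of_lt hθx)]
      exact max_eq_right hθx.le
    have h2 : ‖θ * x + 1‖ ≤ ‖x‖ := by
      refine le_trans (Padic.nonarchimedean _ _) (max_le ?_ ?_)
      · rw [norm_mul]; nlinarith
      · rw [norm_one]; linarith
    have : ‖x‖ ≤ 1 := by
      rw [key]
      calc (‖θ * x + 1‖ / ‖x + θ‖) ^ k ≤ 1 ^ k := by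
            gcongr
            rw [div_le_one (by rw [hx1]; linarith), hx1]; exact h2
        _ = 1 := one_pow k
    linarith
end

section
/- Let p be a prime, k ≥ 1 an integer, and θ ∈ ℚ_p \ {−1,0,1} with |θ|_p > 1. Then every fixed point of the Ising–Potts mapping f_θ lies in θ^{−k}ℤ_p^* ∪ ℤ_p^* ∪ θ^{k}ℤ_p^*: if x ∈ ℚ_p, x ≠ −θ and f_θ(x) = x, then |x|_p ∈ {|θ|_p^{−k}, 1, |θ|_p^{k}}. -/
/-- if `p` is prime, `k ≥ 1`, `θ ∈ ℚ_p \ {-1,0,1}` with `|θ|_p > 1`, then every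
fixed point of the Ising–Potts mapping `f_θ` lies in `θ^{-k}ℤ_p^* ∪ ℤ_p^* ∪ θ^{k}ℤ_p^*`,
i.e. its norm is `|θ|_p^{-k}`, `1` or `|θ|_p^{k}`. -/
theorem fixed_points_of_isingPotts_norms
    (p : ℕ) [Fact p.Prime] (k : ℕ) (hk : 1 ≤ k)
    (θ : ℚ_[p]) (hθ : θ ≠ -1 ∧ θ ≠ 0 ∧ θ ≠ 1) (hθnorm : 1 < ‖θ‖)
    (x : ℚ_[p]) (hx : x ≠ -θ) (hfix : isingPotts p θ k x = x) :
    ‖x‖ = ‖θ‖ ^ (-(k : ℤ)) ∨ ‖x‖ = 1 ∨ ‖x‖ = ‖θ‖ ^ (k : ℤ) := by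
  have hxθ : x + θ ≠ 0 := fun h => hx (eq_neg_of_add_eq_zero_left h)
  set t : ℝ := ‖θ‖ with ht_def
  set a : ℝ := ‖x‖ with ha_def
  have ha0 : 0 ≤ a := norm_nonneg x
  have ht0 : 0 < t := lt_trans one_pos hθnorm
  have hB0 : 0 < ‖x + θ‖ := norm_pos_iff.2 hxθ
  have hθx : ‖θ * x‖ = t * a := norm_mul θ x
  -- zpow simplifications
  have hz1 : ‖θ‖ ^ (-(k : ℤ)) = (t ^ k)⁻¹ := by
    rw [zpow_neg, zpow_natCast]
  have hz2 : ‖θ‖ ^ ((k : ℤ)) = t ^ k := zpow_natCast t k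
  rcases eq_or_lt_of_le hk with h1 | hk2
  · -- k = 1
    have hk1 : k = 1 := h1.symm
    subst hk1
    rw [isingPotts, pow_one, div_eq_iff hxθ] at hfix
    have hx2 : x ^ 2 = 1 := by linear_combination -hfix
    have hn : a ^ 2 = 1 := by
      rw [ha_def, ← norm_pow, hx2, norm_one]
    have hf : (a - 1) * (a + 1) = 0 := by ring_nf; linarith
    rcases mul_eq_zero.mp hf with h | h
    · exact Or.inr (Or.inl (by linarith))
    · nlinarith
  · -- k ≥ 2
    have key : a = (‖θ * x + 1‖ / ‖x + θ‖) ^ k := by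
      conv_lhs => rw [ha_def, ← hfix]
      simp [isingPotts, norm_div, norm_pow]
    have keyAB : a * ‖x + θ‖ ^ k = ‖θ * x + 1‖ ^ k := by
      rw [key, div_pow, div_mul_cancel₀]
      exact pow_ne_zero k (ne_of_gt hB0)
    rcases lt_trichotomy a 1 with h1 | h1 | h1
    · -- a < 1, so a < t and B = t
      have hat : a < t := lt_trans h1 hθnorm
      have hB : ‖x + θ‖ = t := by
        rw [Padic.add_eq_max_of_ne (ne_of_lt hat), max_eq_right (le_of_lt hat)]
      rcases lt_trichotomy (t * a) 1 with h2 | h2 | h2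
      · -- A = 1
        have hA : ‖θ * x + 1‖ = 1 := by
          rw [Padic.add_eq_max_of_ne (by rw [hθx, norm_one]; exact ne_of_lt h2),
            hθx, norm_one, max_eq_right (le_of_lt h2)]
        rw [hB, hA, one_pow] at keyAB
        left
        rw [hz1]
        exact eq_inv_of_mul_eq_one_left keyAB
      · -- t*a = 1 : contradiction
        exfalso
        have hA : ‖θ * x + 1‖ ≤ 1 := by
          calc ‖θ * x + 1‖ ≤ max ‖θ * x‖ ‖(1 : ℚ_[p])‖ := Padic.nonarchimedean _ _
          _ = 1 := by rw [hθx, norm_one, h2, max_self]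
        have hAk : ‖θ * x + 1‖ ^ k ≤ 1 := pow_le_one₀ (norm_nonneg _) hA
        rw [hB] at keyAB
        have hts : t ^ k = t ^ (k - 1) * t := by
          rw [← pow_succ]; congr 1; omega
        have h3 : a * t ^ k = t ^ (k - 1) := by
          rw [hts]; linear_combination t ^ (k - 1) * h2
        have h4 : t ≤ t ^ (k - 1) := le_self_pow₀ (le_of_lt hθnorm) (by omega)
        linarith [keyAB, hAk]
      · -- A = t*a, a = a^k with 0 < a < 1 : contradiction
        exfalso
        have ha0' : 0 < a := by nlinarith
        have hA : ‖θ * x + 1‖ = t * a := by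
          rw [Padic.add_eq_max_of_ne (by rw [hθx, norm_one]; exact ne_of_gt h2),
            hθx, norm_one, max_eq_left (le_of_lt h2)]
        rw [hB, hA, mul_pow] at keyAB
        have haa : a = a ^ k := by
          have := mul_left_cancel₀ (pow_ne_zero k (ne_of_gt ht0))
            (by linarith [keyAB] : t ^ k * a = t ^ k * a ^ k)
          exact this
        have : a ^ k < a := by
          calc a ^ k ≤ a ^ 2 := pow_le_pow_of_le_one (le_of_lt ha0') (le_of_lt h1) hk2
          _ < a := by nlinarith
        linarith
    · exact Or.inr (Or.inl h1)
    · -- a > 1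
      have h2 : 1 < t * a := by nlinarith
      have hA : ‖θ * x + 1‖ = t * a := by
        rw [Padic.add_eq_max_of_ne (by rw [hθx, norm_one]; exact ne_of_gt h2),
          hθx, norm_one, max_eq_left (le_of_lt h2)]
      rcases lt_trichotomy a t with h3 | h3 | h3
      · -- B = t, a = a^k, a > 1: contradiction
        exfalso
        have hB : ‖x + θ‖ = t := by
          rw [Padic.add_eq_max_of_ne (ne_of_lt h3), max_eq_right (le_of_lt h3)]
        rw [hB, hA, mul_pow] at keyAB
        have haa : a = a ^ k := by
          exact mul_left_cancel₀ (pow_ne_zero k (ne_of_gt ht0))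
            (by linarith [keyAB] : t ^ k * a = t ^ k * a ^ k)
        have : a < a ^ k := by
          calc a < a ^ 2 := by nlinarith
          _ ≤ a ^ k := pow_le_pow_right₀ (le_of_lt h1) hk2
        linarith
      · -- a = t : contradiction
        exfalso
        have hBle : ‖x + θ‖ ≤ t := by
          calc ‖x + θ‖ ≤ max ‖x‖ ‖θ‖ := Padic.nonarchimedean _ _
          _ = t := by rw [← ha_def, ← ht_def, h3, max_self]
        have hBk : ‖x + θ‖ ^ k ≤ t ^ k := pow_le_pow_left₀ (norm_nonneg _) hBle k
        rw [hA, h3] at keyAB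
        have h5 : t ^ (2 * k) ≤ t ^ (k + 1) := by
          calc t ^ (2 * k) = (t * t) ^ k := by rw [← sq, ← pow_mul]
          _ = t * ‖x + θ‖ ^ k := keyAB.symm
          _ ≤ t * t ^ k := mul_le_mul_of_nonneg_left hBk (le_of_lt ht0)
          _ = t ^ (k + 1) := by rw [pow_succ, mul_comm]
        have h6 : t ^ (k + 1) < t ^ (2 * k) := pow_lt_pow_right₀ hθnorm (by omega)
        linarith
      · -- a > t : B = a, a = t^k
        right; right
        have hB : ‖x + θ‖ = a := by
          rw [Padic.add_eq_max_of_ne (ne_of_gt h3), max_eq_left (le_of_lt h3)]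
        rw [hB, hA, mul_pow] at keyAB
        have ha0' : (0:ℝ) < a := lt_trans ht0 h3
        rw [hz2]
        have := mul_right_cancel₀ (pow_ne_zero k (ne_of_gt ha0')) keyAB
        exact this
end

section
/- Let p ≥ 3 be a prime, k ≥ 1 an integer, and θ ∈ ℰ_p. Then x₀ = 1 is an attracting fixed point of the Ising–Potts mapping f_θ: f_θ(1) = 1 and |f_θ'(1)|_p < 1. Moreover, the basin of attraction of 1 equals ⋃_{n ≥ 0} f_θ^{−n}(ℰ_p); that is, for y ∈ ℚ_p whose forward orbit under f_θ is defined, f_θ^n(y) → 1 as n → ∞ if and only if f_θ^m(y) ∈ ℰ_p for some m ≥ 0. If in addition the congruence x^k ≡ −1 (mod p) has no solution in ℤ, then every y ∈ ℚ_p whose forward orbit under f_θ is defined satisfies f_θ^n(y) → 1. -/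
/-- `ℰ_p = {x ∈ ℚ_p : |x|_p = 1, |x - 1|_p < p^{-1/(p-1)}}`. -/
noncomputable def padicExpDomain (p : ℕ) [Fact p.Prime] : Set ℚ_[p] :=
  {x | ‖x‖ = 1 ∧ ‖x - 1‖ < (p : ℝ) ^ (-(1 : ℝ) / ((p : ℝ) - 1))}

open Filter Topology Metric IsUltrametricDist

theorem tendsto_iterate_of_dist_le_mul {α : Type*} [PseudoMetricSpace α] {f : α → α} {s : Set α}
    {a x : α} {c : ℝ} (hc₀ : 0 ≤ c) (hc₁ : c < 1) (hs : Set.MapsTo f s s)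
    (hf : ∀ y ∈ s, dist (f y) a ≤ c * dist y a) (hx : x ∈ s) :
    Tendsto (fun n => f^[n] x) atTop (𝓝 a) := by
  have hbound (n : ℕ) : dist (f^[n] x) a ≤ c ^ n * dist x a := by
    induction n with
    | zero => simp
    | succ n ih =>
      rw [Function.iterate_succ_apply']
      calc dist (f (f^[n] x)) a ≤ c * dist (f^[n] x) a := hf _ (hs.iterate n hx)
        _ ≤ c * (c ^ n * dist x a) := by gcongr
        _ = c ^ (n + 1) * dist x a := by ring
  refine tendsto_iff_dist_tendsto_zero.2 (squeeze_zero (fun _ => dist_nonneg) hbound ?_)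
  simpa using (tendsto_pow_atTop_nhds_zero_of_lt_one hc₀ hc₁).mul_const (dist x a)

section Ultrametric

variable {R : Type*} [SeminormedRing R] [NormOneClass R] [IsUltrametricDist R]

theorem norm_pow_sub_one_le {g : R} (hg : ‖g - 1‖ ≤ 1) (k : ℕ) : ‖g ^ k - 1‖ ≤ ‖g - 1‖ := by
  have hg₁ : ‖g‖ ≤ 1 := by
    simpa using (norm_add_le_max (g - 1) 1).trans (max_le hg norm_one.le)
  have hsum : ‖∑ i ∈ Finset.range k, g ^ i‖ ≤ 1 :=
    norm_sum_le_of_forall_le_of_nonneg zero_le_one fun i _ =>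
      (norm_pow_le g i).trans (pow_le_one₀ (norm_nonneg g) hg₁)
  rw [← geom_sum_mul]
  calc ‖(∑ i ∈ Finset.range k, g ^ i) * (g - 1)‖
      ≤ ‖∑ i ∈ Finset.range k, g ^ i‖ * ‖g - 1‖ := norm_mul_le _ _
    _ ≤ ‖g - 1‖ := mul_le_of_le_one_left (norm_nonneg _) hsum

theorem norm_sub_one_le_norm_add_one {x : R} (hx : 1 ≤ ‖x + 1‖) : ‖x - 1‖ ≤ ‖x + 1‖ := by
  have h₂ : ‖-(2 : R)‖ ≤ 1 := by
    simpa only [norm_neg, Nat.cast_ofNat] using norm_natCast_le_one R 2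
  calc ‖x - 1‖ = ‖(x + 1) + -2‖ := by rw [← one_add_one_eq_two]; abel_nf
    _ ≤ ‖x + 1‖ := (norm_add_le_max _ _).trans (max_le le_rfl (h₂.trans hx))

end Ultrametric

section IsingPotts

variable {p : ℕ} [Fact p.Prime]

noncomputable def padicExpRadius (p : ℕ) : ℝ := (p : ℝ) ^ (-(1 : ℝ) / ((p : ℝ) - 1))

theorem padicExpRadius_pos : 0 < padicExpRadius p :=
  Real.rpow_pos_of_pos (by exact_mod_cast (Fact.out : p.Prime).pos) _

theorem padicExpRadius_lt_one : padicExpRadius p < 1 := by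
  have hp : (1 : ℝ) < p := by exact_mod_cast (Fact.out : p.Prime).one_lt
  exact Real.rpow_lt_one_of_one_lt_of_neg hp (div_neg_of_neg_of_pos (by norm_num) (by linarith))

theorem padicExpDomain_eq_ball : padicExpDomain p = ball 1 (padicExpRadius p) := by
  ext x
  rw [mem_ball, dist_eq_norm]
  refine ⟨And.right, fun h => ⟨?_, h⟩⟩
  exact (Padic.norm_eq_of_norm_sub_lt_right (z2 := 1)
    (norm_one (α := ℚ_[p]) ▸ h.trans padicExpRadius_lt_one)).trans norm_one

theorem norm_sub_one_lt_one_of_mem_padicExpDomain {x : ℚ_[p]} (hx : x ∈ padicExpDomain p) :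
    ‖x - 1‖ < 1 :=
  hx.2.trans padicExpRadius_lt_one

theorem norm_add_one_of_mem_padicExpDomain (hp : p ≠ 2) {x : ℚ_[p]}
    (hx : x ∈ padicExpDomain p) : ‖x + 1‖ = 1 := by
  have h₂ : ‖((2 : ℕ) : ℚ_[p])‖ = 1 :=
    Padic.norm_natCast_eq_one_iff.2 ((Nat.coprime_primes Fact.out Nat.prime_two).2 hp)
  rw [show x + 1 = (x - 1) + ((2 : ℕ) : ℚ_[p]) by push_cast; ring,
    norm_add_eq_max_of_norm_ne_norm, h₂, max_eq_right] <;>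
  linarith [norm_sub_one_lt_one_of_mem_padicExpDomain hx]

variable {θ : ℚ_[p]} (k : ℕ)

theorem isingPotts_one (hθ : θ + 1 ≠ 0) : isingPotts p θ k 1 = 1 := by
  rw [isingPotts, mul_one, add_comm 1 θ, div_self hθ, one_pow]

theorem hasDerivAt_isingPotts_one (hθ : θ + 1 ≠ 0) :
    HasDerivAt (isingPotts p θ k) (k * ((θ - 1) / (θ + 1))) 1 := by
  have hnum : HasDerivAt (fun x : ℚ_[p] => θ * x + 1) θ 1 := by
    simpa using ((hasDerivAt_id (1 : ℚ_[p])).const_mul θ).add_const 1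
  have hden : HasDerivAt (fun x : ℚ_[p] => x + θ) 1 1 := (hasDerivAt_id 1).add_const θ
  refine ((hnum.div hden (by rwa [add_comm])).pow k).congr_deriv ?_
  simp only [Pi.div_apply, mul_one, add_comm 1 θ, div_self hθ, one_pow]
  field_simp

theorem norm_isingPotts_sub_one_le (hθ : ‖θ - 1‖ < 1) {x : ℚ_[p]} (hx : 1 ≤ ‖x + 1‖) :
    ‖isingPotts p θ k x - 1‖ ≤ ‖θ - 1‖ * (‖x - 1‖ / ‖x + 1‖) := by
  have hxθ : ‖x + θ‖ = ‖x + 1‖ := by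
    rw [show x + θ = (x + 1) + (θ - 1) by ring, norm_add_eq_max_of_norm_ne_norm, max_eq_left] <;>
    linarith
  have hne : x + θ ≠ 0 := norm_pos_iff.1 (by linarith)
  have hg : ‖(θ * x + 1) / (x + θ) - 1‖ = ‖θ - 1‖ * (‖x - 1‖ / ‖x + 1‖) := by
    rw [show (θ * x + 1) / (x + θ) - 1 = (θ - 1) * (x - 1) / (x + θ) by field_simp; ring,
      norm_div, norm_mul, hxθ, mul_div_assoc]
  have hg₁ : ‖θ - 1‖ * (‖x - 1‖ / ‖x + 1‖) ≤ 1 :=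
    mul_le_one₀ hθ.le (by positivity)
      (div_le_one_of_le₀ (norm_sub_one_le_norm_add_one hx) (norm_nonneg _))
  rw [← hg] at hg₁ ⊢
  exact norm_pow_sub_one_le hg₁ k

theorem isingPotts_mem_padicExpDomain (hθ : θ ∈ padicExpDomain p) {x : ℚ_[p]}
    (hx : 1 ≤ ‖x + 1‖) : isingPotts p θ k x ∈ padicExpDomain p := by
  rw [padicExpDomain_eq_ball, mem_ball, dist_eq_norm]
  calc ‖isingPotts p θ k x - 1‖
      ≤ ‖θ - 1‖ * (‖x - 1‖ / ‖x + 1‖) :=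
        norm_isingPotts_sub_one_le k (norm_sub_one_lt_one_of_mem_padicExpDomain hθ) hx
    _ ≤ ‖θ - 1‖ :=
        mul_le_of_le_one_right (norm_nonneg _)
          (div_le_one_of_le₀ (norm_sub_one_le_norm_add_one hx) (norm_nonneg _))
    _ < padicExpRadius p := hθ.2

variable (hp : p ≠ 2) (hθ : θ ∈ padicExpDomain p)
include hp hθ

theorem mapsTo_isingPotts_padicExpDomain :
    Set.MapsTo (isingPotts p θ k) (padicExpDomain p) (padicExpDomain p) := fun _ hx =>
  isingPotts_mem_padicExpDomain k hθ (norm_add_one_of_mem_padicExpDomain hp hx).ge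

theorem dist_isingPotts_one_le {x : ℚ_[p]} (hx : x ∈ padicExpDomain p) :
    dist (isingPotts p θ k x) 1 ≤ ‖θ - 1‖ * dist x 1 := by
  have hx₁ := norm_add_one_of_mem_padicExpDomain hp hx
  simpa only [dist_eq_norm, hx₁, div_one] using
    norm_isingPotts_sub_one_le k (norm_sub_one_lt_one_of_mem_padicExpDomain hθ) hx₁.ge

theorem tendsto_iterate_isingPotts_iff (y : ℚ_[p]) :
    Tendsto (fun n => (isingPotts p θ k)^[n] y) atTop (𝓝 1) ↔
      ∃ m, (isingPotts p θ k)^[m] y ∈ padicExpDomain p := by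
  constructor
  · intro h
    rw [padicExpDomain_eq_ball]
    exact (h.eventually_mem (ball_mem_nhds 1 padicExpRadius_pos)).exists
  · rintro ⟨m, hm⟩
    rw [← tendsto_add_atTop_iff_nat m]
    simpa only [Function.iterate_add_apply] using
      tendsto_iterate_of_dist_le_mul (norm_nonneg _)
        (norm_sub_one_lt_one_of_mem_padicExpDomain hθ)
        (mapsTo_isingPotts_padicExpDomain k hp hθ) (fun _ => dist_isingPotts_one_le k hp hθ) hm

end IsingPotts

theorem one_le_norm_pow_add_one {p : ℕ} [Fact p.Prime] {k : ℕ} (hk : k ≠ 0)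
    (hξ : ¬ ∃ ξ : ZMod p, ξ ^ k = -1) (g : ℚ_[p]) : 1 ≤ ‖g ^ k + 1‖ := by
  by_contra! h
  have hgk : ‖g‖ ^ k ≤ 1 := by
    simpa using (norm_add_le_max (g ^ k + 1) (-1)).trans (max_le h.le (by simp))
  set z : ℤ_[p] := ⟨g, (pow_le_one_iff_of_nonneg (norm_nonneg g) hk).1 hgk⟩
  have hz : z ^ k + 1 ∈ RingHom.ker PadicInt.toZMod := by
    rw [PadicInt.ker_toZMod, IsLocalRing.mem_maximalIdeal, PadicInt.mem_nonunits]
    exact_mod_cast h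
  exact hξ ⟨PadicInt.toZMod z, eq_neg_of_add_eq_zero_left (by simpa using hz)⟩

/-- for `p ≥ 3` prime, `k ≥ 1` and `θ ∈ ℰ_p`, the point `1` is an attracting fixed
point of `f_θ`; its basin of attraction is `⋃_{n ≥ 0} f_θ^{-n}(ℰ_p)`; and if `x^k ≡ -1 (mod p)`
has no solution, every point with well-defined forward orbit is attracted to `1`. -/
theorem isingPotts_one_attracting_and_basin
    (p : ℕ) [Fact p.Prime] (hp : 3 ≤ p) (k : ℕ) (hk : 1 ≤ k)
    (θ : ℚ_[p]) (hθ : θ ∈ padicExpDomain p) :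
    isingPotts p θ k 1 = 1 ∧
    ‖deriv (isingPotts p θ k) 1‖ < 1 ∧
    (∀ y : ℚ_[p], (∀ n : ℕ, (isingPotts p θ k)^[n] y ≠ -θ) →
      (Filter.Tendsto (fun n => (isingPotts p θ k)^[n] y) Filter.atTop (nhds 1) ↔
        ∃ m : ℕ, (isingPotts p θ k)^[m] y ∈ padicExpDomain p)) ∧
    ((¬ ∃ ξ : ZMod p, ξ ^ k = -1) →
      ∀ y : ℚ_[p], (∀ n : ℕ, (isingPotts p θ k)^[n] y ≠ -θ) →
        Filter.Tendsto (fun n => (isingPotts p θ k)^[n] y) Filter.atTop (nhds 1)) := by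
  have hp₂ : p ≠ 2 := by omega
  have hθ₁ : ‖θ + 1‖ = 1 := norm_add_one_of_mem_padicExpDomain hp₂ hθ
  have hθ₁' : θ + 1 ≠ 0 := norm_ne_zero_iff.1 (by simp [hθ₁])
  refine ⟨isingPotts_one k hθ₁', ?_, fun y _ => tendsto_iterate_isingPotts_iff k hp₂ hθ y, ?_⟩
  · rw [(hasDerivAt_isingPotts_one k hθ₁').deriv, norm_mul, norm_div, hθ₁, div_one]
    calc ‖(k : ℚ_[p])‖ * ‖θ - 1‖ ≤ ‖θ - 1‖ :=
          mul_le_of_le_one_left (norm_nonneg _) (norm_natCast_le_one ℚ_[p] k)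
      _ < 1 := norm_sub_one_lt_one_of_mem_padicExpDomain hθ
  · intro hξ y _
    refine (tendsto_iterate_isingPotts_iff k hp₂ hθ y).2 ⟨2, ?_⟩
    rw [Function.iterate_succ_apply']
    exact isingPotts_mem_padicExpDomain k hθ (one_le_norm_pow_add_one (by omega) hξ _)
end

section
/- Let p ≥ 3 be a prime and k ≥ 1 an integer such that (p−1)/gcd(k, p−1) is even and gcd(k, p−1) ≥ 2. Let θ ∈ ℰ_p with θ ≠ 1 and |θ − 1|_p < |k|_p. Then the Ising–Potts mapping f_θ has infinitely many periodic points: the set {x ∈ ℚ_p : x ≠ −θ, and f_θ^m(x) = x for some m ≥ 1 with the orbit of x defined} is infinite. -/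
open Metric Set Function
open scoped NNReal

theorem exists_fixedPoint_of_lipschitzOnWith {α : Type*} [MetricSpace α] {K : ℝ≥0} {f : α → α}
    {s : Set α} (hK : K < 1) (hs : IsComplete s) (hfs : MapsTo f s s)
    (hf : LipschitzOnWith K f s) {x : α} (hx : x ∈ s) : ∃ y ∈ s, f y = y := by
  obtain ⟨y, hy, hfix, -⟩ :=
    ContractingWith.exists_fixedPoint' hs hfs ⟨hK, hf.mapsToRestrict hfs⟩ hx (edist_ne_top _ _)
  exact ⟨y, hy, hfix⟩

theorem LipschitzOnWith.iterate_of_mapsTo {α : Type*} [PseudoEMetricSpace α] {K : ℝ≥0}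
    {g : α → α} {s : Set α} (hg : LipschitzOnWith K g s) (hgs : MapsTo g s s) :
    ∀ n : ℕ, LipschitzOnWith (K ^ n) g^[n] s
  | 0 => by simpa using LipschitzWith.id.lipschitzOnWith
  | n + 1 => by rw [iterate_succ, pow_succ]; exact (hg.iterate_of_mapsTo hgs n).comp hg hgs

theorem IsUltrametricDist.disjoint_closedBall_of_lt_dist {X : Type*} [PseudoMetricSpace X]
    [IsUltrametricDist X] {x y : X} {r : ℝ} (h : r < dist x y) :
    Disjoint (closedBall x r) (closedBall y r) :=
  disjoint_left.2 fun _ hx hy =>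
    h.not_ge ((dist_triangle_max x _ y).trans (max_le (dist_comm x _ ▸ hx) hy))

section InverseBranches

variable {α β : Type*} {f : β → β} {φ : α → β} {A B : Set α} {g g₁ g₂ : α → α}

theorem iterate_apply_iterate_of_inverseBranch {S : Set α} (hg : ∀ y ∈ S, f (φ (g y)) = φ y)
    (hgS : MapsTo g S S) (n : ℕ) {y : α} (hy : y ∈ S) : f^[n] (φ (g^[n] y)) = φ y := by
  induction n with
  | zero => rfl
  | succ n ih => rw [iterate_succ_apply, iterate_succ_apply', hg _ (hgS.iterate n hy), ih]

theorem minimalPeriod_eq_of_inverseBranches (hAB : Disjoint A B) (hφ : InjOn φ (A ∪ B))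
    (hg₁ : ∀ y ∈ A ∪ B, f (φ (g₁ y)) = φ y) (hg₂ : ∀ y ∈ A ∪ B, f (φ (g₂ y)) = φ y)
    (hg₂B : MapsTo g₂ (A ∪ B) B) {m : ℕ} {y : α} (hyA : y ∈ A) (hy : g₁ (g₂^[m] y) = y) :
    minimalPeriod f (φ y) = m + 1 ∧ ∀ n, f^[n] (φ y) ∈ φ '' (A ∪ B) := by
  have hyS : y ∈ A ∪ B := Or.inl hyA
  have hg₂S : MapsTo g₂ (A ∪ B) (A ∪ B) := hg₂B.mono_right subset_union_right
  -- the orbit of `φ y` runs backwards along `g₂^[m] y, …, g₂ y, y`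
  have horbit : ∀ i j, i + j = m → f^[j + 1] (φ y) = φ (g₂^[i] y) := by
    intro i j hij
    conv_lhs => rw [← hy, iterate_succ_apply, hg₁ _ (hg₂S.iterate m hyS), ← hij, add_comm,
      iterate_add_apply]
    exact iterate_apply_iterate_of_inverseBranch hg₂ hg₂S j (hg₂S.iterate i hyS)
  have hper : IsPeriodicPt f (m + 1) (φ y) := horbit 0 m (zero_add m)
  have hmem : ∀ j ≤ m, f^[j] (φ y) ∈ φ '' (A ∪ B) := by
    rintro (_ | j) hj
    · exact mem_image_of_mem φ hyS
    · rw [horbit (m - j) j (by omega)]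
      exact mem_image_of_mem φ (hg₂S.iterate _ hyS)
  have hne : ∀ j < m, f^[j + 1] (φ y) ≠ φ y := by
    intro j hj h
    rw [horbit (m - j) j (by omega), show m - j = (m - j - 1) + 1 by omega,
      iterate_succ_apply'] at h
    have hB : g₂ (g₂^[m - j - 1] y) ∈ B := hg₂B (hg₂S.iterate _ hyS)
    exact disjoint_left.1 hAB hyA (hφ (subset_union_right hB) hyS h ▸ hB)
  refine ⟨le_antisymm (hper.minimalPeriod_le m.succ_pos) (not_lt.1 fun hlt => ?_), fun n => ?_⟩
  · obtain ⟨j, hj⟩ := Nat.exists_eq_succ_of_ne_zero (hper.minimalPeriod_pos m.succ_pos).ne'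
    exact hne j (by omega) (by rw [← Nat.succ_eq_add_one, ← hj]; exact iterate_minimalPeriod)
  · rw [← hper.iterate_mod_apply]
    exact hmem _ (Nat.lt_succ_iff.1 (Nat.mod_lt _ m.succ_pos))

theorem infinite_periodicPts_of_contracting_inverseBranches [MetricSpace α] {K : ℝ≥0}
    (hK : K < 1) (hS : IsComplete (A ∪ B)) (hA : A.Nonempty) (hAB : Disjoint A B)
    (hφ : InjOn φ (A ∪ B)) (hg₁A : MapsTo g₁ (A ∪ B) A) (hg₂B : MapsTo g₂ (A ∪ B) B)
    (hlip₁ : LipschitzOnWith K g₁ (A ∪ B)) (hlip₂ : LipschitzOnWith K g₂ (A ∪ B))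
    (hg₁ : ∀ y ∈ A ∪ B, f (φ (g₁ y)) = φ y) (hg₂ : ∀ y ∈ A ∪ B, f (φ (g₂ y)) = φ y) :
    {x ∈ periodicPts f | ∀ n, f^[n] x ∈ φ '' (A ∪ B)}.Infinite := by
  have hg₁S : MapsTo g₁ (A ∪ B) (A ∪ B) := hg₁A.mono_right subset_union_left
  have hg₂S : MapsTo g₂ (A ∪ B) (A ∪ B) := hg₂B.mono_right subset_union_right
  have hfix : ∀ m : ℕ, ∃ y ∈ A ∪ B, g₁ (g₂^[m] y) = y := fun m =>
    exists_fixedPoint_of_lipschitzOnWith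
      (mul_lt_one_of_nonneg_of_lt_one_left zero_le hK (pow_le_one₀ zero_le hK.le)) hS
      (hg₁S.comp (hg₂S.iterate m)) (hlip₁.comp (hlip₂.iterate_of_mapsTo hg₂S m) (hg₂S.iterate m))
      (Or.inl hA.some_mem)
  choose y hyS hy using hfix
  have key := fun m => minimalPeriod_eq_of_inverseBranches hAB hφ hg₁ hg₂ hg₂B
    (hy m ▸ hg₁A (hg₂S.iterate m (hyS m))) (hy m)
  refine Set.infinite_of_injective_forall_mem (f := fun m => φ (y m)) (fun m m' h => ?_)
    fun m => ⟨minimalPeriod_pos_iff_mem_periodicPts.1 ?_, (key m).2⟩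
  · simpa [(key m).1, (key m').1] using congrArg (minimalPeriod f) h
  · rw [(key m).1]; exact m.succ_pos

end InverseBranches

theorem norm_pow_sub_pow_le {R : Type*} [NormedCommRing R] [NormOneClass R] [IsUltrametricDist R]
    {t s : R} {r : ℝ} (ht : ‖t‖ ≤ r) (hs : ‖s‖ ≤ r) (j : ℕ) :
    ‖t ^ j - s ^ j‖ ≤ r ^ (j - 1) * ‖t - s‖ := by
  have hr : 0 ≤ r := (norm_nonneg t).trans ht
  rw [← geom_sum₂_mul]
  refine (norm_mul_le _ _).trans (mul_le_mul_of_nonneg_right ?_ (norm_nonneg _))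
  refine IsUltrametricDist.norm_sum_le_of_forall_le_of_nonneg (pow_nonneg hr _) fun i hi => ?_
  calc ‖t ^ i * s ^ (j - 1 - i)‖ ≤ r ^ i * r ^ (j - 1 - i) :=
        (norm_mul_le _ _).trans <| mul_le_mul
          ((norm_pow_le t i).trans (pow_le_pow_left₀ (norm_nonneg _) ht i))
          ((norm_pow_le s _).trans (pow_le_pow_left₀ (norm_nonneg _) hs _))
          (norm_nonneg _) (pow_nonneg hr _)
    _ = r ^ (j - 1) := by rw [← pow_add]; congr 1; have := Finset.mem_range.1 hi; omega

theorem one_add_pow_sub_one_add_pow_sub_mul {R : Type*} [CommRing R] (t s : R) (K : ℕ) :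
    (1 + t) ^ (K + 1) - (1 + s) ^ (K + 1) - ((K + 1 : ℕ) : R) * (t - s) =
      ∑ i ∈ Finset.range K, ((K + 1).choose (i + 2) : R) * (t ^ (i + 2) - s ^ (i + 2)) := by
  simp only [add_comm (1 : R), add_pow, one_pow, mul_one, ← Finset.sum_sub_distrib]
  rw [Finset.sum_range_succ', Finset.sum_range_succ']
  simp only [zero_add, pow_zero, pow_one, Nat.choose_zero_right, Nat.choose_one_right]
  rw [Finset.sum_congr rfl (g := fun i => ((K + 1).choose (i + 2) : R) *
    (t ^ (i + 2) - s ^ (i + 2))) fun i _ => by ring]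
  push_cast
  ring

namespace Padic

variable {p : ℕ} [Fact p.Prime]

theorem norm_le_mul_inv_of_norm_lt {x y : ℚ_[p]} (h : ‖x‖ < ‖y‖) : ‖x‖ ≤ ‖y‖ * (p : ℝ)⁻¹ := by
  have hy : y ≠ 0 := by rintro rfl; exact (norm_nonneg x).not_gt (by simpa using h)
  rw [norm_eq_zpow_neg_valuation hy, norm_lt_pow_iff_norm_le_pow_sub_one] at *
  rwa [← zpow_sub_one₀ (by exact_mod_cast (Fact.out : p.Prime).ne_zero)]

theorem inv_pow_le_norm_natCast (hp : p ≠ 2) {j : ℕ} (hj : 2 ≤ j) :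
    (p : ℝ)⁻¹ ^ (j - 2) ≤ ‖(j : ℚ_[p])‖ := by
  have hp3 : 3 ≤ p := (Fact.out : p.Prime).two_le.lt_of_ne' hp
  by_contra! h
  have hle : ‖((j : ℤ) : ℚ_[p])‖ ≤ (p : ℝ) ^ (-((j - 1 : ℕ) : ℤ)) := by
    rw [show -((j - 1 : ℕ) : ℤ) = -((j - 2 : ℕ) : ℤ) - 1 by omega,
      ← norm_lt_pow_iff_norm_le_pow_sub_one, zpow_neg, zpow_natCast, ← inv_pow]
    simpa using h
  -- so `p ^ (j - 1) ∣ j`, whereas `j < 3 ^ (j - 1) ≤ p ^ (j - 1)`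
  have hpow : (p : ℤ) ^ (j - 1) ≤ j :=
    Int.le_of_dvd (by omega) ((norm_int_le_pow_iff_dvd _ _).1 hle)
  have h3 : (3 : ℤ) ^ (j - 1) ≤ (p : ℤ) ^ (j - 1) :=
    pow_le_pow_left₀ (by norm_num) (by exact_mod_cast hp3) _
  have hbern := one_add_mul_le_pow (a := (2 : ℤ)) (by norm_num) (j - 1)
  norm_num at hbern
  push_cast [Nat.cast_sub (by omega : 1 ≤ j)] at hbern
  linarith

theorem norm_choose_mul_norm_natCast_le (K j : ℕ) :
    ‖(K.choose j : ℚ_[p])‖ * ‖(j : ℚ_[p])‖ ≤ ‖(K : ℚ_[p])‖ := by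
  rcases j with _ | j
  · simp
  rcases K with _ | K
  · simp
  have h := congrArg (fun n : ℕ => ‖(n : ℚ_[p])‖) (Nat.add_one_mul_choose_eq K j)
  simp only [Nat.cast_mul, norm_mul] at h
  rw [← h]
  exact mul_le_of_le_one_right (norm_nonneg _) (IsUltrametricDist.norm_natCast_le_one _ _)

theorem norm_choose_mul_pow_sub_pow_le (hp : p ≠ 2) {t s : ℚ_[p]}
    (ht : ‖t‖ ≤ (p : ℝ)⁻¹) (hs : ‖s‖ ≤ (p : ℝ)⁻¹) (K : ℕ) {j : ℕ} (hj : 2 ≤ j) :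
    ‖(K.choose j : ℚ_[p]) * (t ^ j - s ^ j)‖ ≤ ‖(K : ℚ_[p])‖ * (p : ℝ)⁻¹ * ‖t - s‖ := by
  obtain ⟨i, rfl⟩ : ∃ i, j = i + 2 := ⟨j - 2, by omega⟩
  set r : ℝ := (p : ℝ)⁻¹
  have hj := inv_pow_le_norm_natCast hp (j := i + 2) (by omega)
  rw [Nat.add_sub_cancel] at hj
  calc ‖(K.choose (i + 2) : ℚ_[p]) * (t ^ (i + 2) - s ^ (i + 2))‖
      ≤ ‖(K.choose (i + 2) : ℚ_[p])‖ * r ^ i * r * ‖t - s‖ := by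
        rw [norm_mul, mul_assoc, mul_assoc, ← mul_assoc (r ^ i), ← pow_succ]
        gcongr
        exact norm_pow_sub_pow_le ht hs _
    _ ≤ ‖(K.choose (i + 2) : ℚ_[p])‖ * ‖((i + 2 : ℕ) : ℚ_[p])‖ * r * ‖t - s‖ := by gcongr
    _ ≤ ‖(K : ℚ_[p])‖ * r * ‖t - s‖ := by gcongr; exact norm_choose_mul_norm_natCast_le _ _

theorem norm_pow_sub_pow_sub_mul_le (hp : p ≠ 2) {w w' : ℚ_[p]}
    (hw : w ∈ closedBall 1 (p : ℝ)⁻¹) (hw' : w' ∈ closedBall 1 (p : ℝ)⁻¹) (K : ℕ) :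
    ‖w ^ K - w' ^ K - K * (w - w')‖ ≤ ‖(K : ℚ_[p])‖ * (p : ℝ)⁻¹ * ‖w - w'‖ := by
  obtain ⟨t, rfl⟩ : ∃ t, w = 1 + t := ⟨w - 1, by ring⟩
  obtain ⟨s, rfl⟩ : ∃ s, w' = 1 + s := ⟨w' - 1, by ring⟩
  rw [mem_closedBall_iff_norm, add_sub_cancel_left] at hw hw'
  rcases K with _ | K
  · simp
  rw [add_sub_add_left_eq_sub, one_add_pow_sub_one_add_pow_sub_mul]
  exact IsUltrametricDist.norm_sum_le_of_forall_le_of_nonneg (by positivity) fun i _ =>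
    norm_choose_mul_pow_sub_pow_le hp hw hw' _ (by omega)

theorem norm_pow_sub_pow_eq (hp : p ≠ 2) {w w' : ℚ_[p]}
    (hw : w ∈ closedBall 1 (p : ℝ)⁻¹) (hw' : w' ∈ closedBall 1 (p : ℝ)⁻¹) (K : ℕ) :
    ‖w ^ K - w' ^ K‖ = ‖(K : ℚ_[p])‖ * ‖w - w'‖ := by
  have htail := norm_pow_sub_pow_sub_mul_le hp hw hw' K
  have hD : ‖(K : ℚ_[p]) * (w - w')‖ = ‖(K : ℚ_[p])‖ * ‖w - w'‖ := norm_mul _ _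
  rcases (norm_nonneg ((K : ℚ_[p]) * (w - w'))).eq_or_lt with h0 | hpos
  · have hzero : (K : ℚ_[p]) * (w - w') = 0 := norm_eq_zero.1 h0.symm
    rw [hzero, sub_zero, mul_right_comm, ← hD, ← h0, zero_mul] at htail
    rw [← hD, ← h0]
    exact le_antisymm htail (norm_nonneg _)
  · refine (norm_eq_of_norm_sub_lt_right (htail.trans_lt ?_)).trans hD
    rw [hD, mul_right_comm]
    refine mul_lt_of_lt_one_right (hD ▸ hpos) (inv_lt_one_of_one_lt₀ ?_)
    exact_mod_cast (Fact.out : p.Prime).one_lt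

theorem surjOn_pow_closedBall (hp : p ≠ 2) {K : ℕ} (hK : K ≠ 0) :
    SurjOn (fun w : ℚ_[p] => w ^ K) (closedBall 1 (p : ℝ)⁻¹)
      (closedBall 1 (‖(K : ℚ_[p])‖ * (p : ℝ)⁻¹)) := by
  intro u hu
  rw [mem_closedBall_iff_norm] at hu
  have hK0 : (K : ℚ_[p]) ≠ 0 := Nat.cast_ne_zero.2 hK
  have hKpos : 0 < ‖(K : ℚ_[p])‖ := norm_pos_iff.2 hK0
  have hr1 : (p : ℝ)⁻¹ < 1 := inv_lt_one_of_one_lt₀ (by exact_mod_cast (Fact.out : p.Prime).one_lt)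
  -- Newton's map for `w ^ K = u`, with the derivative at `1` in place of the one at `w`
  set T : ℚ_[p] → ℚ_[p] := fun w => w - (w ^ K - u) / K
  have hmaps : MapsTo T (closedBall 1 (p : ℝ)⁻¹) (closedBall 1 (p : ℝ)⁻¹) := by
    intro w hw
    have htail := norm_pow_sub_pow_sub_mul_le hp hw (mem_closedBall_self (by positivity)) K
    rw [mem_closedBall_iff_norm] at hw ⊢
    have hT : T w - 1 = (u - 1) / K + -((w ^ K - 1 ^ K - K * (w - 1)) / K) := by
      simp only [T]; field_simp; ring
    rw [hT]
    refine (IsUltrametricDist.norm_add_le_max _ _).trans (max_le ?_ ?_)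
    · rw [norm_div, div_le_iff₀ hKpos]; linarith
    · rw [norm_neg, norm_div, div_le_iff₀ hKpos]
      calc _ ≤ ‖(K : ℚ_[p])‖ * (p : ℝ)⁻¹ * ‖w - 1‖ := htail
          _ ≤ ‖(K : ℚ_[p])‖ * (p : ℝ)⁻¹ * 1 := by gcongr; linarith
          _ = _ := by ring
  have hlip : LipschitzOnWith (p : ℝ≥0)⁻¹ T (closedBall 1 (p : ℝ)⁻¹) := by
    refine LipschitzOnWith.of_dist_le_mul fun w hw w' hw' => ?_
    have hT : T w - T w' = -((w ^ K - w' ^ K - K * (w - w')) / K) := by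
      simp only [T]; field_simp; ring
    rw [dist_eq_norm, dist_eq_norm, hT, norm_neg, norm_div, div_le_iff₀ hKpos]
    push_cast
    linarith [norm_pow_sub_pow_sub_mul_le hp hw hw' K]
  obtain ⟨w, hw, hTw⟩ := exists_fixedPoint_of_lipschitzOnWith (by exact_mod_cast hr1)
    isClosed_closedBall.isComplete hmaps hlip (mem_closedBall_self (by positivity))
  refine ⟨w, hw, ?_⟩
  simpa [T, sub_eq_zero, hK0] using hTw

end Padic

theorem ZMod.exists_ne_pow_eq_neg_one {p : ℕ} [Fact p.Prime] (hp : p ≠ 2) {k : ℕ}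
    (heven : Even ((p - 1) / Nat.gcd k (p - 1))) (hgcd : 2 ≤ Nat.gcd k (p - 1)) :
    ∃ β β' : ZMod p, β ^ k = -1 ∧ β' ^ k = -1 ∧ β ≠ β' := by
  have hcard : Nat.card (ZMod p)ˣ = p - 1 := by rw [Nat.card_eq_fintype_card, ZMod.card_units]
  -- the image of `x ↦ x ^ k` has even order, so it contains the unique element `-1` of order 2
  obtain ⟨x, hx⟩ := exists_prime_orderOf_dvd_card' (G := (powMonoidHom k : (ZMod p)ˣ →* _).range) 2
    (by rw [IsCyclic.card_powMonoidHom_range, hcard, Nat.gcd_comm]; exact even_iff_two_dvd.1 heven)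
  obtain ⟨β, hβ⟩ := x.2
  have hβk : (β : ZMod p) ^ k = -1 := by
    rw [← CharP.orderOf_eq_two_iff p hp, ← Units.val_pow_eq_pow_val, orderOf_units]
    rw [← Subgroup.orderOf_coe] at hx
    simpa [← hβ] using hx
  -- the kernel of `x ↦ x ^ k` has order `gcd k (p - 1) ≥ 2`
  obtain ⟨⟨ζ, hζk⟩, hζ⟩ := Subgroup.ne_bot_iff_exists_ne_one.1
    ((Subgroup.one_lt_card_iff_ne_bot _).1 (by
      rw [IsCyclic.card_powMonoidHom_ker, hcard, Nat.gcd_comm]; omega) :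
      (powMonoidHom k : (ZMod p)ˣ →* _).ker ≠ ⊥)
  refine ⟨β, β * ζ, hβk, ?_, ?_⟩
  · rw [MonoidHom.mem_ker, powMonoidHom_apply] at hζk
    rw [← Units.val_mul, ← Units.val_pow_eq_pow_val, mul_pow, hζk, mul_one,
      Units.val_pow_eq_pow_val, hβk]
  · intro h
    exact hζ (Subtype.ext (mul_eq_left.1 (Units.ext h).symm))

namespace PadicInt

variable {p : ℕ} [Fact p.Prime]

theorem norm_lt_one_iff_toZMod_eq_zero (x : ℤ_[p]) : ‖x‖ < 1 ↔ toZMod x = 0 := by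
  rw [← RingHom.mem_ker, ker_toZMod, IsLocalRing.mem_maximalIdeal, mem_nonunits]

theorem norm_eq_one_of_toZMod_ne_zero {x : ℤ_[p]} (h : toZMod x ≠ 0) : ‖x‖ = 1 :=
  le_antisymm (norm_le_one x) (not_lt.1 fun hlt => h ((norm_lt_one_iff_toZMod_eq_zero x).1 hlt))

theorem norm_coe_sub_coe_eq_one {x y : ℤ_[p]} (h : toZMod x ≠ toZMod y) :
    ‖(x : ℚ_[p]) - y‖ = 1 := by
  rw [← coe_sub, ← norm_def]
  exact norm_eq_one_of_toZMod_ne_zero (by rwa [map_sub, sub_ne_zero])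

open Polynomial in
theorem existsUnique_pow_card_sub_one_eq_one {a : ℤ_[p]} (ha : ‖a‖ = 1) :
    ∃! z : ℤ_[p], z ^ (p - 1) = 1 ∧ ‖z - a‖ < 1 := by
  set F : ℤ_[p][X] := X ^ (p - 1) - 1
  have hF : ∀ z : ℤ_[p], aeval z F = z ^ (p - 1) - 1 := by simp [F]
  have hderiv : ‖aeval a (derivative F)‖ = 1 := by
    simp [F, derivative_X_pow, ha, norm_natCast_p_sub_one]
  have hfermat : ‖a ^ (p - 1) - 1‖ < 1 := by
    have ha0 : toZMod a ≠ 0 := by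
      rw [ne_eq, ← norm_lt_one_iff_toZMod_eq_zero, ha]; exact lt_irrefl 1
    rw [norm_lt_one_iff_toZMod_eq_zero, map_sub, map_pow, map_one,
      ZMod.pow_card_sub_one_eq_one ha0, sub_self]
  obtain ⟨z, hz, hza, -, huniq⟩ := hensels_lemma (F := F) (a := a)
    (by rwa [hderiv, one_pow, hF])
  rw [hderiv] at hza huniq
  refine ⟨z, ⟨by rwa [hF, sub_eq_zero] at hz, hza⟩, fun z' ⟨hz', hz'a⟩ => huniq z' ?_ hz'a⟩
  rw [hF, hz', sub_self]


theorem exists_pow_eq_neg_one_toZMod_eq (hp : p ≠ 2) {k : ℕ} (hk : k ≠ 0) {β : ZMod p}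
    (hβ : β ^ k = -1) : ∃ ω : ℤ_[p], ω ^ k = -1 ∧ toZMod ω = β := by
  have hlift : toZMod ((β.val : ℕ) : ℤ_[p]) = β := by rw [map_natCast, ZMod.natCast_zmod_val]
  have hβ0 : β ≠ 0 := by
    rintro rfl
    rw [zero_pow hk, zero_eq_neg] at hβ
    exact one_ne_zero hβ
  obtain ⟨ω, ⟨hω1, hωβ⟩, -⟩ :=
    existsUnique_pow_card_sub_one_eq_one (norm_eq_one_of_toZMod_ne_zero (hlift ▸ hβ0))
  rw [norm_lt_one_iff_toZMod_eq_zero, map_sub, sub_eq_zero, hlift] at hωβ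
  refine ⟨ω, ?_, hωβ⟩
  -- `ω ^ k` and `-1` are roots of `X ^ (p - 1) - 1` with the same residue
  refine (existsUnique_pow_card_sub_one_eq_one (a := -1) (by simp)).unique ⟨?_, ?_⟩
    ⟨(Nat.Prime.even_sub_one Fact.out hp).neg_one_pow, by simp⟩
  · rw [← pow_mul, mul_comm, pow_mul, hω1, one_pow]
  · rw [sub_neg_eq_add, norm_lt_one_iff_toZMod_eq_zero, map_add, map_pow, hωβ, hβ, map_one,
      neg_add_cancel]

end PadicInt

theorem Padic.exists_pow_eq_neg_one_pair {p : ℕ} [Fact p.Prime] (hp : p ≠ 2) {k : ℕ} (hk : k ≠ 0)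
    (heven : Even ((p - 1) / Nat.gcd k (p - 1))) (hgcd : 2 ≤ Nat.gcd k (p - 1)) :
    ∃ ω ω' : ℚ_[p], ω ^ k = -1 ∧ ω' ^ k = -1 ∧ ‖ω - 1‖ = 1 ∧ ‖ω' - 1‖ = 1 ∧ ‖ω - ω'‖ = 1 := by
  obtain ⟨β, β', hβ, hβ', hne⟩ := ZMod.exists_ne_pow_eq_neg_one hp heven hgcd
  obtain ⟨ω, hω, rfl⟩ := PadicInt.exists_pow_eq_neg_one_toZMod_eq hp hk hβ
  obtain ⟨ω', hω', rfl⟩ := PadicInt.exists_pow_eq_neg_one_toZMod_eq hp hk hβ'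
  have hne1 : ∀ x : ℤ_[p], x ^ k = -1 → PadicInt.toZMod x ≠ PadicInt.toZMod 1 := by
    intro x hx h
    rw [map_one] at h
    have := congrArg PadicInt.toZMod hx
    rw [map_pow, h, one_pow, map_neg, map_one] at this
    exact hp (by rwa [eq_comm, neg_one_eq_one_iff, ZMod.ringChar_zmod_n] at this)
  refine ⟨ω, ω', by simp [← PadicInt.coe_pow, hω], by simp [← PadicInt.coe_pow, hω'], ?_, ?_,
    PadicInt.norm_coe_sub_coe_eq_one hne⟩
  · simpa using PadicInt.norm_coe_sub_coe_eq_one (hne1 ω hω)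
  · simpa using PadicInt.norm_coe_sub_coe_eq_one (hne1 ω' hω')

section IsingMobius

variable {K : Type*} [Field K] {θ v w : K}

def isingMobiusInv (θ v : K) : K :=
  (1 - θ * v) / (v - θ)

theorem isingMobiusInv_add (hv : v ≠ θ) : isingMobiusInv θ v + θ = (1 - θ ^ 2) / (v - θ) := by
  rw [isingMobiusInv, div_add' _ _ _ (sub_ne_zero.2 hv)]
  ring_nf

theorem isingMobiusInv_sub_isingMobiusInv (hv : v ≠ θ) (hw : w ≠ θ) :
    isingMobiusInv θ v - isingMobiusInv θ w = (1 - θ ^ 2) * (w - v) / ((v - θ) * (w - θ)) := by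
  rw [isingMobiusInv, isingMobiusInv, div_sub_div _ _ (sub_ne_zero.2 hv) (sub_ne_zero.2 hw)]
  ring_nf

theorem isingMobiusInv_ne_neg (hθ : θ ^ 2 ≠ 1) (hv : v ≠ θ) : isingMobiusInv θ v ≠ -θ := by
  rw [ne_eq, ← sub_eq_zero, sub_neg_eq_add, isingMobiusInv_add hv]
  exact div_ne_zero (sub_ne_zero.2 (Ne.symm hθ)) (sub_ne_zero.2 hv)

theorem isingMobius_isingMobiusInv (hθ : θ ^ 2 ≠ 1) (hv : v ≠ θ) :
    (θ * isingMobiusInv θ v + 1) / (isingMobiusInv θ v + θ) = v := by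
  have h1 : (1 - θ ^ 2) ≠ 0 := sub_ne_zero.2 (Ne.symm hθ)
  have h2 : v - θ ≠ 0 := sub_ne_zero.2 hv
  rw [isingMobiusInv_add hv, div_eq_iff (div_ne_zero h1 h2), isingMobiusInv]
  field_simp
  ring

theorem isingMobiusInv_injOn (hθ : θ ^ 2 ≠ 1) : InjOn (isingMobiusInv θ) {v | v ≠ θ} :=
  LeftInvOn.injOn (f₁' := fun x => (θ * x + 1) / (x + θ)) fun _ hv =>
    isingMobius_isingMobiusInv hθ hv

end IsingMobius

theorem norm_eq_one_of_pow_eq_neg_one {F : Type*} [NormedDivisionRing F] {c : F} {k : ℕ}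
    (hk : k ≠ 0) (hc : c ^ k = -1) : ‖c‖ = 1 :=
  (pow_eq_one_iff_of_nonneg (norm_nonneg c) hk).1 (by rw [← norm_pow, hc, norm_neg, norm_one])

section IsingPotts

variable {p : ℕ} [Fact p.Prime] {θ c y : ℚ_[p]} {k : ℕ}

theorem ne_zero_of_norm_lt_norm_natCast {x : ℚ_[p]} (h : ‖x‖ < ‖(k : ℚ_[p])‖) : k ≠ 0 := by
  rintro rfl
  exact (norm_nonneg x).not_gt (by simpa using h)

theorem sq_ne_one_of_norm_sub_one_lt_one (hp : p ≠ 2) (hθ1 : θ ≠ 1) (hθ : ‖θ - 1‖ < 1) :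
    θ ^ 2 ≠ 1 := by
  intro h
  rcases sq_eq_one_iff.1 h with h | rfl
  · exact hθ1 h
  · have h2 : ‖((2 : ℕ) : ℚ_[p])‖ < 1 := by
      rwa [← norm_neg, show -((2 : ℕ) : ℚ_[p]) = -1 - 1 by norm_num]
    rw [Padic.norm_natCast_lt_one_iff, Nat.prime_dvd_prime_iff_eq Fact.out Nat.prime_two] at h2
    exact hp h2

theorem norm_one_sub_sq_le (hθ : ‖θ - 1‖ < 1) : ‖1 - θ ^ 2‖ ≤ ‖θ - 1‖ := by
  have hθ1 : ‖θ + 1‖ ≤ 1 := by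
    rw [show θ + 1 = (θ - 1) + (2 : ℕ) by push_cast; ring]
    exact (IsUltrametricDist.norm_add_le_max _ _).trans
      (max_le hθ.le (IsUltrametricDist.norm_natCast_le_one _ 2))
  rw [show 1 - θ ^ 2 = -((θ - 1) * (θ + 1)) by ring, norm_neg, norm_mul]
  exact mul_le_of_le_one_right (norm_nonneg _) hθ1

theorem closedBall_subset_sphere (hc : ‖c - 1‖ = 1) (hθ : ‖θ - 1‖ < 1) :
    closedBall c (p : ℝ)⁻¹ ⊆ sphere θ 1 := by
  intro y hy
  rw [mem_closedBall_iff_norm] at hy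
  have hsmall : ‖(y - c) + (1 - θ)‖ < ‖c - 1‖ := by
    refine (IsUltrametricDist.norm_add_le_max _ _).trans_lt (max_lt ?_ ?_)
    · rw [hc]
      exact hy.trans_lt (inv_lt_one_of_one_lt₀ (by exact_mod_cast (Fact.out : p.Prime).one_lt))
    · rwa [norm_sub_rev, hc]
  rw [mem_sphere_iff_norm, show y - θ = (c - 1) + ((y - c) + (1 - θ)) by ring,
    IsUltrametricDist.norm_add_eq_max_of_norm_ne_norm hsmall.ne', max_eq_left hsmall.le, hc]

theorem norm_neg_isingMobiusInv_sub_one_le (hθ : ‖θ - 1‖ < 1) (hy : y ∈ sphere θ 1) :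
    ‖-isingMobiusInv θ y - 1‖ ≤ ‖θ - 1‖ := by
  rw [show -isingMobiusInv θ y - 1 = (θ - 1) + -(isingMobiusInv θ y + θ) by ring,
    isingMobiusInv_add (ne_of_mem_sphere hy one_ne_zero)]
  refine (IsUltrametricDist.norm_add_le_max _ _).trans (max_le le_rfl ?_)
  rw [norm_neg, norm_div, mem_sphere_iff_norm.1 hy, div_one]
  exact norm_one_sub_sq_le hθ

theorem norm_isingMobiusInv_sub_isingMobiusInv_le (hθ : ‖θ - 1‖ < 1) {y' : ℚ_[p]}
    (hy : y ∈ sphere θ 1) (hy' : y' ∈ sphere θ 1) :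
    ‖isingMobiusInv θ y - isingMobiusInv θ y'‖ ≤ ‖θ - 1‖ * ‖y - y'‖ := by
  rw [isingMobiusInv_sub_isingMobiusInv (ne_of_mem_sphere hy one_ne_zero)
    (ne_of_mem_sphere hy' one_ne_zero), norm_div, norm_mul, norm_mul, norm_sub_rev y',
    mem_sphere_iff_norm.1 hy, mem_sphere_iff_norm.1 hy', mul_one, div_one]
  gcongr
  exact norm_one_sub_sq_le hθ

/-- `y ↦ c · (-φ y) ^ (1 / k)` for `φ = isingMobiusInv θ`, with the `k`-th root taken within `1 / p`
of `1`: a branch of the inverse of `v ↦ M (v ^ k)` near `c`. -/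
noncomputable def isingBranch (θ : ℚ_[p]) (k : ℕ) (c y : ℚ_[p]) : ℚ_[p] :=
  c * invFunOn (fun w : ℚ_[p] => w ^ k) (closedBall 1 (p : ℝ)⁻¹) (-isingMobiusInv θ y)

theorem neg_isingMobiusInv_mem_closedBall (hθk : ‖θ - 1‖ < ‖(k : ℚ_[p])‖)
    (hy : y ∈ sphere θ 1) : -isingMobiusInv θ y ∈ closedBall 1 (‖(k : ℚ_[p])‖ * (p : ℝ)⁻¹) :=
  mem_closedBall_iff_norm.2 <|
    (norm_neg_isingMobiusInv_sub_one_le (hθk.trans_le (IsUltrametricDist.norm_natCast_le_one _ k))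
      hy).trans (Padic.norm_le_mul_inv_of_norm_lt hθk)

theorem isingBranch_pow (hp : p ≠ 2) (hθk : ‖θ - 1‖ < ‖(k : ℚ_[p])‖) (hc : c ^ k = -1)
    (hy : y ∈ sphere θ 1) : isingBranch θ k c y ^ k = isingMobiusInv θ y := by
  have hroot : invFunOn (fun w : ℚ_[p] => w ^ k) (closedBall 1 (p : ℝ)⁻¹) (-isingMobiusInv θ y) ^ k
      = -isingMobiusInv θ y :=
    (Padic.surjOn_pow_closedBall hp (ne_zero_of_norm_lt_norm_natCast hθk)).rightInvOn_invFunOn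
      (neg_isingMobiusInv_mem_closedBall hθk hy)
  rw [isingBranch, mul_pow, hc, hroot, neg_one_mul, neg_neg]

theorem isingBranch_mem_closedBall (hp : p ≠ 2) (hθk : ‖θ - 1‖ < ‖(k : ℚ_[p])‖)
    (hc : c ^ k = -1) (hy : y ∈ sphere θ 1) : isingBranch θ k c y ∈ closedBall c (p : ℝ)⁻¹ := by
  have hk := ne_zero_of_norm_lt_norm_natCast hθk
  have := (Padic.surjOn_pow_closedBall hp hk).mapsTo_invFunOn
    (neg_isingMobiusInv_mem_closedBall hθk hy)
  rw [mem_closedBall_iff_norm] at this ⊢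
  rwa [isingBranch, ← mul_sub_one, norm_mul, norm_eq_one_of_pow_eq_neg_one hk hc, one_mul]

theorem isingPotts_isingMobiusInv_isingBranch (hp : p ≠ 2) (hθ1 : θ ≠ 1)
    (hθk : ‖θ - 1‖ < ‖(k : ℚ_[p])‖) (hc : c ^ k = -1) (hc1 : ‖c - 1‖ = 1)
    (hy : y ∈ sphere θ 1) :
    isingPotts p θ k (isingMobiusInv θ (isingBranch θ k c y)) = isingMobiusInv θ y := by
  have hθ : ‖θ - 1‖ < 1 := hθk.trans_le (IsUltrametricDist.norm_natCast_le_one _ k)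
  have hbranch : isingBranch θ k c y ≠ θ := ne_of_mem_sphere
    (closedBall_subset_sphere hc1 hθ (isingBranch_mem_closedBall hp hθk hc hy)) one_ne_zero
  rw [isingPotts, isingMobius_isingMobiusInv (sq_ne_one_of_norm_sub_one_lt_one hp hθ1 hθ) hbranch,
    isingBranch_pow hp hθk hc hy]

theorem lipschitzOnWith_isingBranch (hp : p ≠ 2) (hθk : ‖θ - 1‖ < ‖(k : ℚ_[p])‖)
    (hc : c ^ k = -1) : LipschitzOnWith (p : ℝ≥0)⁻¹ (isingBranch θ k c) (sphere θ 1) := by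
  have hk := ne_zero_of_norm_lt_norm_natCast hθk
  have hsurj := Padic.surjOn_pow_closedBall (p := p) hp hk
  have hpow : ∀ u ∈ closedBall 1 (‖(k : ℚ_[p])‖ * (p : ℝ)⁻¹),
      invFunOn (fun w : ℚ_[p] => w ^ k) (closedBall 1 (p : ℝ)⁻¹) u ^ k = u :=
    fun _ hu => hsurj.rightInvOn_invFunOn hu
  refine LipschitzOnWith.of_dist_le_mul fun y hy y' hy' => ?_
  have hu := neg_isingMobiusInv_mem_closedBall hθk hy
  have hu' := neg_isingMobiusInv_mem_closedBall hθk hy'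
  have hroot := Padic.norm_pow_sub_pow_eq hp (hsurj.mapsTo_invFunOn hu)
    (hsurj.mapsTo_invFunOn hu') k
  rw [hpow _ hu, hpow _ hu', neg_sub_neg, norm_sub_rev] at hroot
  rw [dist_eq_norm, dist_eq_norm, isingBranch, isingBranch, ← mul_sub, norm_mul,
    norm_eq_one_of_pow_eq_neg_one hk hc, one_mul, NNReal.coe_inv, NNReal.coe_natCast]
  refine le_of_mul_le_mul_left ?_ (norm_pos_iff.2 (Nat.cast_ne_zero.2 hk : (k : ℚ_[p]) ≠ 0))
  rw [← hroot, ← mul_assoc]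
  exact (norm_isingMobiusInv_sub_isingMobiusInv_le
    (hθk.trans_le (IsUltrametricDist.norm_natCast_le_one _ k)) hy hy').trans
    (by gcongr; exact Padic.norm_le_mul_inv_of_norm_lt hθk)

theorem isingPotts_infinite_periodicPts (hp : p ≠ 2) (hθ1 : θ ≠ 1)
    (hθk : ‖θ - 1‖ < ‖(k : ℚ_[p])‖) {ω ω' : ℚ_[p]} (hω : ω ^ k = -1) (hω' : ω' ^ k = -1)
    (hω1 : ‖ω - 1‖ = 1) (hω'1 : ‖ω' - 1‖ = 1) (hωω' : ‖ω - ω'‖ = 1) :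
    {x ∈ periodicPts (isingPotts p θ k) | ∀ n, (isingPotts p θ k)^[n] x ≠ -θ}.Infinite := by
  have hθ : ‖θ - 1‖ < 1 := hθk.trans_le (IsUltrametricDist.norm_natCast_le_one _ k)
  have hr1 : (p : ℝ)⁻¹ < 1 := inv_lt_one_of_one_lt₀ (by exact_mod_cast (Fact.out : p.Prime).one_lt)
  have hS := union_subset (closedBall_subset_sphere (p := p) hω1 hθ)
    (closedBall_subset_sphere (p := p) hω'1 hθ)
  have hne : ∀ y ∈ closedBall ω (p : ℝ)⁻¹ ∪ closedBall ω' (p : ℝ)⁻¹, y ≠ θ :=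
    fun y hy => ne_of_mem_sphere (hS hy) one_ne_zero
  have hθ2 := sq_ne_one_of_norm_sub_one_lt_one hp hθ1 hθ
  refine (infinite_periodicPts_of_contracting_inverseBranches (by exact_mod_cast hr1)
    (isClosed_closedBall.union isClosed_closedBall).isComplete
    ⟨ω, mem_closedBall_self (by positivity)⟩
    (IsUltrametricDist.disjoint_closedBall_of_lt_dist (by rwa [dist_eq_norm, hωω']))
    ((isingMobiusInv_injOn hθ2).mono hne)
    (fun y hy => isingBranch_mem_closedBall hp hθk hω (hS hy))
    (fun y hy => isingBranch_mem_closedBall hp hθk hω' (hS hy))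
    ((lipschitzOnWith_isingBranch hp hθk hω).mono hS)
    ((lipschitzOnWith_isingBranch hp hθk hω').mono hS)
    (fun y hy => isingPotts_isingMobiusInv_isingBranch hp hθ1 hθk hω hω1 (hS hy))
    (fun y hy => isingPotts_isingMobiusInv_isingBranch hp hθ1 hθk hω' hω'1 (hS hy))).mono ?_
  rintro x ⟨hx, horbit⟩
  refine ⟨hx, fun n => ?_⟩
  obtain ⟨y, hy, hxy⟩ := horbit n
  rw [← hxy]
  exact isingMobiusInv_ne_neg hθ2 (hne y hy)

end IsingPotts

theorem isingPotts_infinitely_many_periodic_points_general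
    (p : ℕ) [Fact p.Prime] (hp : 3 ≤ p) (k : ℕ)
    (heven : Even ((p - 1) / Nat.gcd k (p - 1))) (hgcd : 2 ≤ Nat.gcd k (p - 1))
    (θ : ℚ_[p]) (hθ1 : θ ≠ 1)
    (hθk : ‖θ - 1‖ < ‖(k : ℚ_[p])‖) :
    {x : ℚ_[p] | (∀ n : ℕ, (isingPotts p θ k)^[n] x ≠ -θ) ∧
      ∃ m : ℕ, 1 ≤ m ∧ (isingPotts p θ k)^[m] x = x}.Infinite := by
  have hp2 : p ≠ 2 := by omega
  obtain ⟨ω, ω', hω, hω', hω1, hω'1, hωω'⟩ := Padic.exists_pow_eq_neg_one_pair hp2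
    (ne_zero_of_norm_lt_norm_natCast hθk) heven hgcd
  refine (isingPotts_infinite_periodicPts hp2 hθ1 hθk hω hω' hω1 hω'1 hωω').mono ?_
  rintro x ⟨hx, horbit⟩
  obtain ⟨m, hm, hxm⟩ := mem_periodicPts.1 hx
  exact ⟨horbit, m, hm, hxm⟩

/-- let `p ≥ 3` be prime and `k ≥ 1` with `(p-1)/gcd(k,p-1)` even and
`gcd(k,p-1) ≥ 2`; let `θ ∈ ℰ_p`, `θ ≠ 1`, `|θ - 1|_p < |k|_p`. Then `f_θ` has infinitely many
periodic points (with well-defined forward orbits). -/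
theorem isingPotts_infinitely_many_periodic_points
    (p : ℕ) [Fact p.Prime] (hp : 3 ≤ p) (k : ℕ) (hk : 1 ≤ k)
    (heven : Even ((p - 1) / Nat.gcd k (p - 1))) (hgcd : 2 ≤ Nat.gcd k (p - 1))
    (θ : ℚ_[p]) (hθE : θ ∈ padicExpDomain p) (hθ1 : θ ≠ 1)
    (hθk : ‖θ - 1‖ < ‖(k : ℚ_[p])‖) :
    {x : ℚ_[p] | (∀ n : ℕ, (isingPotts p θ k)^[n] x ≠ -θ) ∧
      ∃ m : ℕ, 1 ≤ m ∧ (isingPotts p θ k)^[m] x = x}.Infinite :=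
  isingPotts_infinitely_many_periodic_points_general p hp k heven hgcd θ hθ1 hθk
end

section
/- Let p ≥ 3 be a prime and A, C ∈ ℚ_p with |A|_p < 1 and |C|_p < 1, and let f(x) = (Ax² + 1)/(Cx² + 1). Then f maps the unit sphere S = {x ∈ ℚ_p : |x|_p = 1} into itself, and for all x, y ∈ S one has |f(x) − f(y)|_p ≤ |A − C|_p |x − y|_p. -/
/-- The mapping `f(x) = (Ax² + 1)/(Cx² + 1)` on `ℚ_p`. -/
noncomputable def fracMap (p : ℕ) [Fact p.Prime] (A C : ℚ_[p]) (x : ℚ_[p]) : ℚ_[p] :=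
  (A * x ^ 2 + 1) / (C * x ^ 2 + 1)

lemma norm_mul_sq_add_one {K : Type*} [NormedDivisionRing K] [IsUltrametricDist K] {B x : K}
    (hB : ‖B‖ < 1) (hx : ‖x‖ = 1) : ‖B * x ^ 2 + 1‖ = 1 := by
  have hBx : ‖B * x ^ 2‖ = ‖B‖ := by rw [norm_mul, norm_pow, hx, one_pow, mul_one]
  rw [IsUltrametricDist.norm_add_eq_max_of_norm_ne_norm (by rw [hBx, norm_one]; exact hB.ne),
    hBx, norm_one, max_eq_right hB.le]

lemma fracMap_sub_fracMap {p : ℕ} [Fact p.Prime] {A C x y : ℚ_[p]}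
    (hx : C * x ^ 2 + 1 ≠ 0) (hy : C * y ^ 2 + 1 ≠ 0) :
    fracMap p A C x - fracMap p A C y =
      (A - C) * (x - y) * (x + y) / ((C * x ^ 2 + 1) * (C * y ^ 2 + 1)) := by
  rw [fracMap, fracMap, div_sub_div _ _ hx hy]
  ring

theorem fracMap_sphere_contraction_general
    (p : ℕ) [Fact p.Prime]
    (A C : ℚ_[p]) (hA : ‖A‖ < 1) (hC : ‖C‖ < 1) :
    (∀ x : ℚ_[p], ‖x‖ = 1 → ‖fracMap p A C x‖ = 1) ∧
    (∀ x y : ℚ_[p], ‖x‖ = 1 → ‖y‖ = 1 →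
      ‖fracMap p A C x - fracMap p A C y‖ ≤ ‖A - C‖ * ‖x - y‖) := by
  refine ⟨fun x hx => ?_, fun x y hx hy => ?_⟩
  · rw [fracMap, norm_div, norm_mul_sq_add_one hA hx, norm_mul_sq_add_one hC hx, div_one]
  · have hdx := norm_mul_sq_add_one hC hx
    have hdy := norm_mul_sq_add_one hC hy
    have hsum : ‖x + y‖ ≤ 1 := (IsUltrametricDist.norm_add_le_max x y).trans (by simp [hx, hy])
    rw [fracMap_sub_fracMap (norm_ne_zero_iff.mp (by simp [hdx]))
        (norm_ne_zero_iff.mp (by simp [hdy])), norm_div, norm_mul, norm_mul, norm_mul, hdx, hdy,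
      mul_one, div_one]
    exact mul_le_of_le_one_right (by positivity) hsum

/-- for `p ≥ 3` prime and `|A|_p, |C|_p < 1`, the map
`f(x) = (Ax²+1)/(Cx²+1)` maps the unit sphere `S = {x : |x|_p = 1}` into itself and satisfies
`|f(x) - f(y)|_p ≤ |A - C|_p |x - y|_p` on `S`. -/
theorem fracMap_sphere_contraction
    (p : ℕ) [Fact p.Prime] (hp : 3 ≤ p)
    (A C : ℚ_[p]) (hA : ‖A‖ < 1) (hC : ‖C‖ < 1) :
    (∀ x : ℚ_[p], ‖x‖ = 1 → ‖fracMap p A C x‖ = 1) ∧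
    (∀ x y : ℚ_[p], ‖x‖ = 1 → ‖y‖ = 1 →
      ‖fracMap p A C x - fracMap p A C y‖ ≤ ‖A - C‖ * ‖x - y‖) :=
  fracMap_sphere_contraction_general p A C hA hC
end

section
/- Let p ≥ 3 be a prime and A, C ∈ ℚ_p with |A|_p < 1, |C|_p < 1, |A|_p ≠ |C|_p and |A|_p² < |C|_p, let f(x) = (Ax² + 1)/(Cx² + 1), and let x₀ be the unique fixed point of f in ℰ_p. Then f has a fixed point different from x₀ if and only if −C is a square in ℚ_p; in that case there are exactly two such fixed points x₁, x₂, both are repelling (|f'(x_i)|_p > 1 for i = 1,2), and |x₁|_p = |x₂|_p = |C|_p^{−1/2}. -/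
section Ultrametric

variable {K : Type*} [NormedField K] [IsUltrametricDist K]

theorem norm_add_eq_left_of_norm_lt {x y : K} (h : ‖y‖ < ‖x‖) : ‖x + y‖ = ‖x‖ := by
  rw [IsUltrametricDist.norm_add_eq_max_of_norm_ne_norm h.ne', max_eq_left h.le]

theorem norm_eq_one_of_norm_sub_one_lt {u : K} (h : ‖u - 1‖ < 1) : ‖u‖ = 1 := by
  simpa using norm_add_eq_left_of_norm_lt (x := 1) (y := u - 1) (by simpa using h)

theorem norm_mul_sub_eq_max {A C x : K} (hx : ‖x‖ = 1) (hAC : ‖A‖ ≠ ‖C‖) :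
    ‖C * x - A‖ = max ‖A‖ ‖C‖ := by
  have h : ‖C * x‖ ≠ ‖-A‖ := by simpa [hx] using hAC.symm
  rw [sub_eq_add_neg, IsUltrametricDist.norm_add_eq_max_of_norm_ne_norm h]
  simp [hx, max_comm]

theorem sq_norm_mul_sub_lt {A C x : K} (hx : ‖x‖ = 1) (hC : ‖C‖ < 1) (hAC : ‖A‖ ≠ ‖C‖)
    (hA2C : ‖A‖ ^ 2 < ‖C‖) : ‖C * x - A‖ ^ 2 < ‖C‖ := by
  have hCpos : 0 < ‖C‖ := (sq_nonneg _).trans_lt hA2C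
  rcases max_choice ‖A‖ ‖C‖ with h | h <;> rw [norm_mul_sub_eq_max hx hAC, h]
  exacts [hA2C, pow_lt_self_of_lt_one₀ hCpos hC one_lt_two]

theorem norm_sub_eq_norm_mul_sub {A C x : K} (hx : ‖x‖ = 1) (hAC : ‖A‖ ≠ ‖C‖) :
    ‖A - C‖ = ‖C * x - A‖ := by
  rw [norm_sub_rev, norm_mul_sub_eq_max hx hAC]
  simpa using norm_mul_sub_eq_max (A := A) (C := C) norm_one hAC

end Ultrametric

theorem isSquare_mul_mul_self_iff {K : Type*} [Field K] {a t : K} (ht : t ≠ 0) :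
    IsSquare (a * (t * t)) ↔ IsSquare a := by
  refine ⟨fun h => ?_, fun h => h.mul (IsSquare.mul_self t)⟩
  simpa [ht] using h.div (IsSquare.mul_self t)

theorem quadratic_roots_ne {K : Type*} [Field K] [NeZero (2 : K)] {a b s : K} (ha : a ≠ 0)
    (hs : s ≠ 0) : (-b + s) / (2 * a) ≠ (-b - s) / (2 * a) := by
  rw [Ne, div_left_inj' (mul_ne_zero two_ne_zero ha)]
  intro h
  have h2s : (2 : K) * s = 0 := by linear_combination h
  exact hs ((mul_eq_zero.1 h2s).resolve_left two_ne_zero)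

namespace Padic

variable {p : ℕ} [Fact p.Prime]

theorem norm_two_eq_one (hp : p ≠ 2) : ‖(2 : ℚ_[p])‖ = 1 := by
  simpa using norm_natCast_eq_one_iff.2 ((Nat.coprime_primes Fact.out Nat.prime_two).2 hp)

theorem isSquare_of_norm_sub_one_lt (hp : p ≠ 2) {u : ℚ_[p]} (h : ‖u - 1‖ < 1) :
    IsSquare u := by
  let a : ℤ_[p] := ⟨u, (norm_eq_one_of_norm_sub_one_lt h).le⟩
  have h2 : ‖(2 : ℤ_[p])‖ = 1 := by
    rw [PadicInt.norm_def]
    exact_mod_cast norm_two_eq_one hp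
  have h1a : ‖(1 - a : ℤ_[p])‖ = ‖u - 1‖ := by
    rw [PadicInt.norm_def, norm_sub_rev]
    rfl
  obtain ⟨z, hz, -⟩ :=
    hensels_lemma (p := p) (R := ℤ_[p]) (F := Polynomial.X ^ 2 - Polynomial.C a) (a := 1)
      (by simpa [one_add_one_eq_two, h2, h1a] using h)
  have hz' : z ^ 2 = a := sub_eq_zero.1 (by simpa using hz)
  refine ⟨z, ?_⟩
  rw [← sq]
  exact_mod_cast (congrArg ((↑) : ℤ_[p] → ℚ_[p]) hz').symm

variable {C β γ : ℚ_[p]}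

theorem norm_discrim (hp : p ≠ 2) (hβ : ‖β‖ ^ 2 < ‖C‖) (hγ : ‖γ‖ = 1) :
    ‖discrim C β γ‖ = ‖C‖ := by
  have h4Cγ : ‖-(4 * C * γ)‖ = ‖C‖ := by
    rw [norm_neg, norm_mul, norm_mul, hγ, show (4 : ℚ_[p]) = 2 * 2 by norm_num, norm_mul,
      norm_two_eq_one hp]
    ring
  rw [discrim, sub_eq_add_neg, add_comm, norm_add_eq_left_of_norm_lt, h4Cγ]
  rwa [h4Cγ, norm_pow]

theorem discrim_ne_zero (hp : p ≠ 2) (hβ : ‖β‖ ^ 2 < ‖C‖) (hγ : ‖γ‖ = 1) :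
    discrim C β γ ≠ 0 := by
  rw [← norm_pos_iff, norm_discrim hp hβ hγ]
  exact (sq_nonneg _).trans_lt hβ

theorem norm_eq_of_quadratic_eq_zero (hp : p ≠ 2) (hβ : ‖β‖ ^ 2 < ‖C‖) (hγ : ‖γ‖ = 1) {x : ℚ_[p]}
    (hx : C * (x * x) + β * x + γ = 0) : ‖x‖ = 1 / √‖C‖ := by
  have hC : 0 < ‖C‖ := (sq_nonneg _).trans_lt hβ
  set s := 2 * C * x + β
  have hs : ‖s‖ = √‖C‖ := by
    rw [← norm_discrim hp hβ hγ, discrim_eq_sq_of_quadratic_eq_zero hx, norm_pow,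
      Real.sqrt_sq (norm_nonneg _)]
  have hβs : ‖-β‖ < ‖s‖ := by
    rw [norm_neg, hs]
    exact Real.lt_sqrt (norm_nonneg _) |>.2 hβ
  have h2Cx : ‖C‖ * ‖x‖ = √‖C‖ := by
    rw [← hs, ← norm_add_eq_left_of_norm_lt hβs, add_neg_cancel_right, norm_mul, norm_mul,
      norm_two_eq_one hp, one_mul]
  rw [← Real.sqrt_div_self', eq_div_iff hC.ne', mul_comm, h2Cx]

theorem isSquare_discrim_iff (hp : p ≠ 2) (hβ : ‖β‖ ^ 2 < ‖C‖) (hγ : ‖γ - 1‖ < 1) :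
    IsSquare (discrim C β γ) ↔ IsSquare (-C) := by
  have hC : 0 < ‖C‖ := (sq_nonneg _).trans_lt hβ
  have h4 : ‖(4 : ℚ_[p])‖ = 1 := by
    rw [show (4 : ℚ_[p]) = 2 * 2 by norm_num, norm_mul, norm_two_eq_one hp, one_mul]
  -- `discrim C β γ = -4C u` with `u = γ - β² / 4C ≡ 1`, a square by Hensel
  have hu : ‖γ - β ^ 2 / (4 * C) - 1‖ < 1 := by
    rw [sub_right_comm, sub_eq_add_neg]
    refine (IsUltrametricDist.norm_add_le_max _ _).trans_lt (max_lt hγ ?_)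
    rw [norm_neg, norm_div, norm_mul, h4, one_mul, norm_pow, div_lt_one hC]
    exact hβ
  obtain ⟨w, hw⟩ := isSquare_of_norm_sub_one_lt hp hu
  have hw0 : w ≠ 0 := by
    rintro rfl
    rw [hw] at hu
    simp at hu
  have hdiscrim : discrim C β γ = -C * ((2 * w) * (2 * w)) := by
    have hC0 : C ≠ 0 := norm_pos_iff.1 hC
    rw [discrim, show 2 * w * (2 * w) = 4 * (w * w) by ring, ← hw]
    field_simp
    ring
  rw [hdiscrim, isSquare_mul_mul_self_iff (mul_ne_zero two_ne_zero hw0)]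

end Padic

section FixedPoints

variable {R : Type*} [CommRing R]

theorem cubic_eq_sub_mul_quadratic {A C x₀ : R} (h₀ : C * x₀ ^ 3 - A * x₀ ^ 2 + x₀ - 1 = 0)
    (x : R) : C * x ^ 3 - A * x ^ 2 + x - 1 =
      (x - x₀) * (C * (x * x) + (C * x₀ - A) * x + (1 + x₀ * (C * x₀ - A))) := by
  linear_combination h₀

theorem add_one_eq_of_quadratic_eq_zero {A C x₀ x : R}
    (hx : C * (x * x) + (C * x₀ - A) * x + (1 + x₀ * (C * x₀ - A)) = 0) :
    C * x ^ 2 + 1 = -(C * x₀ - A) * (x + x₀) := by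
  linear_combination hx

variable {p : ℕ} [Fact p.Prime] {A C x₀ x : ℚ_[p]}

theorem fracMap_eq_self_iff (hx : C * x ^ 2 + 1 ≠ 0) :
    fracMap p A C x = x ↔ C * x ^ 3 - A * x ^ 2 + x - 1 = 0 := by
  rw [fracMap, div_eq_iff hx]
  constructor <;> intro h <;> linear_combination -h

theorem cubic_eq_zero_of_fracMap_eq_self (hx : x ≠ 0) (h : fracMap p A C x = x) :
    C * x ^ 3 - A * x ^ 2 + x - 1 = 0 := by
  refine (fracMap_eq_self_iff fun hd => hx ?_).1 h
  -- a zero denominator would give the junk value `fracMap p A C x = 0`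
  rw [← h, fracMap, hd, div_zero]

theorem hasDerivAt_fracMap (hx : C * x ^ 2 + 1 ≠ 0) :
    HasDerivAt (fracMap p A C) (2 * x * (A - C) / (C * x ^ 2 + 1) ^ 2) x := by
  have hnum : HasDerivAt (fun y => A * y ^ 2 + 1) (A * (2 * x)) x := by
    simpa using ((hasDerivAt_pow 2 x).const_mul A).add_const 1
  have hden : HasDerivAt (fun y => C * y ^ 2 + 1) (C * (2 * x)) x := by
    simpa using ((hasDerivAt_pow 2 x).const_mul C).add_const 1
  refine (hnum.div hden hx).congr_deriv ?_
  ring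

theorem norm_one_add_mul_sub_one_lt (hx₀ : ‖x₀‖ = 1) (hC : ‖C‖ < 1)
    (hβ : ‖C * x₀ - A‖ ^ 2 < ‖C‖) : ‖1 + x₀ * (C * x₀ - A) - 1‖ < 1 := by
  rw [add_sub_cancel_left, norm_mul, hx₀, one_mul]
  exact (pow_lt_one_iff_of_nonneg (norm_nonneg _) two_ne_zero).1 (hβ.trans hC)

theorem norm_eq_of_fixedPoint_quadratic_eq_zero (hp : p ≠ 2) (hx₀ : ‖x₀‖ = 1) (hC : ‖C‖ < 1)
    (hβ : ‖C * x₀ - A‖ ^ 2 < ‖C‖)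
    (hx : C * (x * x) + (C * x₀ - A) * x + (1 + x₀ * (C * x₀ - A)) = 0) :
    ‖x‖ = 1 / √‖C‖ :=
  Padic.norm_eq_of_quadratic_eq_zero hp hβ
    (norm_eq_one_of_norm_sub_one_lt (norm_one_add_mul_sub_one_lt hx₀ hC hβ)) hx

theorem one_lt_norm_of_fixedPoint_quadratic_eq_zero (hp : p ≠ 2) (hx₀ : ‖x₀‖ = 1)
    (hC : ‖C‖ < 1) (hβ : ‖C * x₀ - A‖ ^ 2 < ‖C‖)
    (hx : C * (x * x) + (C * x₀ - A) * x + (1 + x₀ * (C * x₀ - A)) = 0) : 1 < ‖x‖ := by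
  have hCpos : 0 < ‖C‖ := (sq_nonneg _).trans_lt hβ
  rw [norm_eq_of_fixedPoint_quadratic_eq_zero hp hx₀ hC hβ hx, one_lt_div (by positivity),
    Real.sqrt_lt' one_pos, one_pow]
  exact hC

theorem norm_add_one_eq_of_quadratic_eq_zero (hx₀ : ‖x₀‖ = 1) (h1x : 1 < ‖x‖)
    (hx : C * (x * x) + (C * x₀ - A) * x + (1 + x₀ * (C * x₀ - A)) = 0) :
    ‖C * x ^ 2 + 1‖ = ‖C * x₀ - A‖ * ‖x‖ := by
  rw [add_one_eq_of_quadratic_eq_zero hx, norm_mul, norm_neg,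
    norm_add_eq_left_of_norm_lt (hx₀ ▸ h1x)]

theorem fracMap_extra_fixedPoint_iff (hp : p ≠ 2) (hx₀ : ‖x₀‖ = 1)
    (h₀ : C * x₀ ^ 3 - A * x₀ ^ 2 + x₀ - 1 = 0) (hC : ‖C‖ < 1) (hβ0 : C * x₀ - A ≠ 0)
    (hβ : ‖C * x₀ - A‖ ^ 2 < ‖C‖) (x : ℚ_[p]) :
    (C * x ^ 2 + 1 ≠ 0 ∧ fracMap p A C x = x ∧ x ≠ x₀) ↔
      C * (x * x) + (C * x₀ - A) * x + (1 + x₀ * (C * x₀ - A)) = 0 := by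
  constructor
  · rintro ⟨hd, hfix, hne⟩
    have hcubic := (fracMap_eq_self_iff hd).1 hfix
    rw [cubic_eq_sub_mul_quadratic h₀] at hcubic
    exact (mul_eq_zero.1 hcubic).resolve_left (sub_ne_zero.2 hne)
  · intro hx
    have h1x := one_lt_norm_of_fixedPoint_quadratic_eq_zero hp hx₀ hC hβ hx
    have hd : C * x ^ 2 + 1 ≠ 0 := by
      rw [← norm_pos_iff, norm_add_one_eq_of_quadratic_eq_zero hx₀ h1x hx]
      exact mul_pos (norm_pos_iff.2 hβ0) (one_pos.trans h1x)
    refine ⟨hd, (fracMap_eq_self_iff hd).2 ?_, fun h => ?_⟩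
    · rw [cubic_eq_sub_mul_quadratic h₀, hx, mul_zero]
    · rw [h, hx₀] at h1x
      exact lt_irrefl _ h1x

theorem one_lt_norm_deriv_fracMap (hp : p ≠ 2) (hx₀ : ‖x₀‖ = 1) (hC : ‖C‖ < 1)
    (hβ0 : C * x₀ - A ≠ 0) (hβ : ‖C * x₀ - A‖ ^ 2 < ‖C‖) (hAC : ‖A - C‖ = ‖C * x₀ - A‖)
    (hx : C * (x * x) + (C * x₀ - A) * x + (1 + x₀ * (C * x₀ - A)) = 0) :
    1 < ‖deriv (fracMap p A C) x‖ := by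
  have hd := norm_add_one_eq_of_quadratic_eq_zero hx₀
    (one_lt_norm_of_fixedPoint_quadratic_eq_zero hp hx₀ hC hβ hx) hx
  have hxn := norm_eq_of_fixedPoint_quadratic_eq_zero hp hx₀ hC hβ hx
  set b := ‖C * x₀ - A‖
  set c := √‖C‖
  have hb : 0 < b := norm_pos_iff.2 hβ0
  have hc : 0 < c := Real.sqrt_pos.2 ((sq_nonneg _).trans_lt hβ)
  have hbc : b < c := Real.lt_sqrt hb.le |>.2 hβ
  have hd0 : C * x ^ 2 + 1 ≠ 0 := by
    rw [← norm_pos_iff, hd, hxn]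
    positivity
  rw [(hasDerivAt_fracMap hd0).deriv, norm_div, norm_mul, norm_mul, Padic.norm_two_eq_one hp,
    hAC, norm_pow, hd, hxn, show 1 * (1 / c) * b / (b * (1 / c)) ^ 2 = c / b by field_simp,
    one_lt_div hb]
  exact hbc

end FixedPoints

theorem fracMap_extra_fixed_points_small_A_general
    (p : ℕ) [Fact p.Prime] (hp : 3 ≤ p)
    (A C : ℚ_[p]) (hC : ‖C‖ < 1) (hAC : ‖A‖ ≠ ‖C‖)
    (hA2C : ‖A‖ ^ 2 < ‖C‖)
    (x₀ : ℚ_[p]) (hx₀ : x₀ ∈ padicExpDomain p ∧ fracMap p A C x₀ = x₀) :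
    ((∃ x : ℚ_[p], C * x ^ 2 + 1 ≠ 0 ∧ fracMap p A C x = x ∧ x ≠ x₀) ↔
      IsSquare (-C)) ∧
    (IsSquare (-C) →
      ∃ x₁ x₂ : ℚ_[p], x₁ ≠ x₂ ∧
        (∀ x : ℚ_[p], (C * x ^ 2 + 1 ≠ 0 ∧ fracMap p A C x = x ∧ x ≠ x₀) ↔
          (x = x₁ ∨ x = x₂)) ∧
        1 < ‖deriv (fracMap p A C) x₁‖ ∧ 1 < ‖deriv (fracMap p A C) x₂‖ ∧
        ‖x₁‖ = 1 / Real.sqrt ‖C‖ ∧ ‖x₂‖ = 1 / Real.sqrt ‖C‖) := by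
  have hp2 : p ≠ 2 := by omega
  obtain ⟨⟨hx₀n, -⟩, hx₀f⟩ := hx₀
  have hC0 : C ≠ 0 := norm_pos_iff.1 ((sq_nonneg _).trans_lt hA2C)
  have h₀ := cubic_eq_zero_of_fracMap_eq_self (norm_ne_zero_iff.1 (hx₀n ▸ one_ne_zero)) hx₀f
  have hβ0 : C * x₀ - A ≠ 0 := fun h => hAC (by rw [← sub_eq_zero.1 h, norm_mul, hx₀n, mul_one])
  have hβC := sq_norm_mul_sub_lt hx₀n hC hAC hA2C
  have hAC' := norm_sub_eq_norm_mul_sub hx₀n hAC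
  have hγ := norm_one_add_mul_sub_one_lt hx₀n hC hβC
  have hextra := fracMap_extra_fixedPoint_iff hp2 hx₀n h₀ hC hβ0 hβC
  have hsq := Padic.isSquare_discrim_iff hp2 hβC hγ
  refine ⟨?_, fun hC' => ?_⟩
  · rw [exists_congr hextra, ← hsq]
    exact ⟨fun ⟨x, hx⟩ => ⟨_, (discrim_eq_sq_of_quadratic_eq_zero hx).trans (sq _)⟩,
      exists_quadratic_eq_zero hC0⟩
  · obtain ⟨s, hs⟩ := hsq.2 hC'
    have hroots := quadratic_eq_zero_iff hC0 hs
    have hx₁ := (hroots _).2 (Or.inl rfl)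
    have hx₂ := (hroots _).2 (Or.inr rfl)
    have hs0 : s ≠ 0 := by
      rintro rfl
      exact Padic.discrim_ne_zero hp2 hβC (norm_eq_one_of_norm_sub_one_lt hγ) (by rw [hs, mul_zero])
    exact ⟨_, _, quadratic_roots_ne hC0 hs0, fun x => (hextra x).trans (hroots x),
      one_lt_norm_deriv_fracMap hp2 hx₀n hC hβ0 hβC hAC' hx₁,
      one_lt_norm_deriv_fracMap hp2 hx₀n hC hβ0 hβC hAC' hx₂,
      norm_eq_of_fixedPoint_quadratic_eq_zero hp2 hx₀n hC hβC hx₁,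
      norm_eq_of_fixedPoint_quadratic_eq_zero hp2 hx₀n hC hβC hx₂⟩

/-- for `p ≥ 3` prime, `|A|_p, |C|_p < 1`, `|A|_p ≠ |C|_p`, `|A|_p² < |C|_p`,
and `x₀` the unique fixed point of `f` in `ℰ_p`: `f` has a fixed point different from `x₀`
iff `-C` is a square in `ℚ_p`; in that case there are exactly two such fixed points
`x₁, x₂`, both repelling, with `|x₁|_p = |x₂|_p = 1/√|C|_p`. -/
theorem fracMap_extra_fixed_points_small_A
    (p : ℕ) [Fact p.Prime] (hp : 3 ≤ p)
    (A C : ℚ_[p]) (hA : ‖A‖ < 1) (hC : ‖C‖ < 1) (hAC : ‖A‖ ≠ ‖C‖)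
    (hA2C : ‖A‖ ^ 2 < ‖C‖)
    (x₀ : ℚ_[p]) (hx₀ : x₀ ∈ padicExpDomain p ∧ fracMap p A C x₀ = x₀)
    (hx₀uniq : ∀ y ∈ padicExpDomain p, fracMap p A C y = y → y = x₀) :
    ((∃ x : ℚ_[p], C * x ^ 2 + 1 ≠ 0 ∧ fracMap p A C x = x ∧ x ≠ x₀) ↔
      IsSquare (-C)) ∧
    (IsSquare (-C) →
      ∃ x₁ x₂ : ℚ_[p], x₁ ≠ x₂ ∧
        (∀ x : ℚ_[p], (C * x ^ 2 + 1 ≠ 0 ∧ fracMap p A C x = x ∧ x ≠ x₀) ↔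
          (x = x₁ ∨ x = x₂)) ∧
        1 < ‖deriv (fracMap p A C) x₁‖ ∧ 1 < ‖deriv (fracMap p A C) x₂‖ ∧
        ‖x₁‖ = 1 / Real.sqrt ‖C‖ ∧ ‖x₂‖ = 1 / Real.sqrt ‖C‖) :=
  fracMap_extra_fixed_points_small_A_general p hp A C hC hAC hA2C x₀ hx₀
end

section
/- Let p ≥ 3 be a prime and a, b, c ∈ ℰ_p with |b − 1|_p + |c − 1|_p ≠ 0, and let g(u) = a(bu² + 1)/(u² + c). Then g has a unique fixed point x₀ in ℰ_p. -/
/-- The mapping `g(u) = a(bu² + 1)/(u² + c)` on `ℚ_p`. -/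
noncomputable def lamMap (p : ℕ) [Fact p.Prime] (a b c : ℚ_[p]) (u : ℚ_[p]) : ℚ_[p] :=
  a * ((b * u ^ 2 + 1) / (u ^ 2 + c))

/-! For odd `p`, `ℰ_p` is exactly the set of `p`-adic integers congruent to `1` mod `p`,
since a norm below `1` is at most `p⁻¹ < p^{-1/(p-1)}`. On that set the denominator `u² + c` is
`≡ 2 ≢ 0`, so the fixed points of `g` are the roots of the cubic `x³ - ab x² + c x - a`. This cubic
vanishes mod `p` at `1` with derivative `3 - 2ab + c ≡ 2`, so Hensel's lemma gives exactly one
root congruent to `1`. -/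

open Polynomial PadicInt

theorem Real.rpow_neg_one_div_sub_one_lt_one {q : ℝ} (hq : 1 < q) : q ^ (-1 / (q - 1)) < 1 :=
  Real.rpow_lt_one_of_one_lt_of_neg hq (div_neg_of_neg_of_pos (by norm_num) (by linarith))

theorem Real.inv_lt_rpow_neg_one_div_sub_one {q : ℝ} (hq : 2 < q) : q⁻¹ < q ^ (-1 / (q - 1)) := by
  have h_exp : (-1 : ℝ) < -1 / (q - 1) := by
    rw [neg_div, neg_lt_neg_iff, div_lt_one (by linarith)]
    linarith
  simpa [Real.rpow_neg_one] using Real.rpow_lt_rpow_of_exponent_lt (by linarith) h_exp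

namespace PadicInt

variable {p : ℕ} [Fact p.Prime]

theorem toZMod_eq_zero_iff {x : ℤ_[p]} : toZMod x = 0 ↔ ‖x‖ < 1 := by
  rw [← RingHom.mem_ker, ker_toZMod, IsLocalRing.mem_maximalIdeal, mem_nonunits]

theorem toZMod_eq_one_iff {x : ℤ_[p]} : toZMod x = 1 ↔ ‖x - 1‖ < 1 := by
  rw [← toZMod_eq_zero_iff, map_sub, map_one, sub_eq_zero]

theorem norm_eq_one_iff_toZMod_ne_zero {x : ℤ_[p]} : ‖x‖ = 1 ↔ toZMod x ≠ 0 := by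
  rw [Ne, toZMod_eq_zero_iff, not_lt]
  exact ⟨ge_of_eq, (norm_le_one x).antisymm⟩

theorem existsUnique_root_of_toZMod {F : ℤ_[p][X]} {a : ℤ_[p]} (h_root : toZMod (F.eval a) = 0)
    (h_simple : toZMod (F.derivative.eval a) ≠ 0) :
    ∃! z : ℤ_[p], toZMod z = toZMod a ∧ F.eval z = 0 := by
  have h_deriv : ‖F.derivative.eval a‖ = 1 := norm_eq_one_iff_toZMod_ne_zero.2 h_simple
  have h_near (z : ℤ_[p]) : toZMod z = toZMod a ↔ ‖z - a‖ < 1 := by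
    rw [← sub_eq_zero, ← map_sub, toZMod_eq_zero_iff]
  obtain ⟨z, hz_root, hz_near, -, hz_unique⟩ :=
    hensels_lemma (F := F) (a := a) (by
      rwa [coe_aeval_eq_eval, h_deriv, one_pow, ← toZMod_eq_zero_iff])
  simp only [coe_aeval_eq_eval, h_deriv] at hz_root hz_near hz_unique
  refine ⟨z, ⟨(h_near z).2 hz_near, hz_root⟩, fun y ⟨hy_near, hy_root⟩ ↦ ?_⟩
  exact hz_unique y hy_root ((h_near y).1 hy_near)

end PadicInt

variable {p : ℕ} [Fact p.Prime]

theorem padicExpDomain_eq_image (hp : 3 ≤ p) :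
    padicExpDomain p = (↑) '' {x : ℤ_[p] | toZMod x = 1} := by
  have hp' : (2 : ℝ) < p := by exact_mod_cast hp
  ext x
  constructor
  · rintro ⟨hx_norm, hx_near⟩
    refine ⟨⟨x, hx_norm.le⟩, toZMod_eq_one_iff.2 ?_, rfl⟩
    exact hx_near.trans (Real.rpow_neg_one_div_sub_one_lt_one (by linarith))
  · rintro ⟨x, hx : toZMod x = 1, rfl⟩
    have hx_near : ‖x - 1‖ ≤ (p : ℝ)⁻¹ := by
      simpa using (norm_lt_pow_iff_norm_le_pow_sub_one (x - 1) 0).1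
        (by simpa using toZMod_eq_one_iff.1 hx)
    refine ⟨norm_eq_one_iff_toZMod_ne_zero.2 (by simp [hx]), ?_⟩
    exact hx_near.trans_lt (Real.inv_lt_rpow_neg_one_div_sub_one hp')

/-- The fixed-point equation `lamMap p a b c x = x` with the denominator cleared. -/
noncomputable def lamCubic (a b c : ℤ_[p]) : ℤ_[p][X] :=
  X ^ 3 - C (a * b) * X ^ 2 + C c * X - C a

theorem eval_lamCubic (a b c x : ℤ_[p]) :
    (lamCubic a b c).eval x = x ^ 3 - a * b * x ^ 2 + c * x - a := by
  simp [lamCubic]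

theorem eval_derivative_lamCubic (a b c x : ℤ_[p]) :
    (lamCubic a b c).derivative.eval x = 3 * x ^ 2 - 2 * (a * b) * x + c := by
  simp [lamCubic]
  ring

theorem ZMod.two_ne_zero_of_ne_two (hp : p ≠ 2) : (2 : ZMod p) ≠ 0 :=
  Ring.two_ne_zero (by rwa [ZMod.ringChar_zmod_n])

theorem lamMap_coe_eq_coe_iff (hp : p ≠ 2) {a b c x : ℤ_[p]} (hc : toZMod c = 1)
    (hx : toZMod x = 1) : lamMap p a b c x = x ↔ (lamCubic a b c).eval x = 0 := by
  have h_den : x ^ 2 + c ≠ 0 := fun h ↦ ZMod.two_ne_zero_of_ne_two hp <| by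
    simpa [hc, hx, one_add_one_eq_two] using congrArg toZMod h
  have h_den' : (x : ℚ_[p]) ^ 2 + c ≠ 0 := by simpa using coe_ne_zero.2 h_den
  rw [lamMap, mul_div_assoc', div_eq_iff h_den', ← coe_eq_zero, eval_lamCubic]
  push_cast
  constructor <;> intro h <;> linear_combination -h

theorem existsUnique_root_lamCubic (hp : p ≠ 2) {a b c : ℤ_[p]} (ha : toZMod a = 1)
    (hb : toZMod b = 1) (hc : toZMod c = 1) :
    ∃! x : ℤ_[p], toZMod x = 1 ∧ (lamCubic a b c).eval x = 0 := by
  simpa using existsUnique_root_of_toZMod (F := lamCubic a b c) (a := 1)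
    (by simp [eval_lamCubic, ha, hb, hc])
    (by
      convert ZMod.two_ne_zero_of_ne_two hp using 1
      simp [eval_derivative_lamCubic, ha, hb, hc, map_ofNat]
      ring)

theorem lamMap_unique_fixed_point_in_Ep_general
    (p : ℕ) [Fact p.Prime] (hp : 3 ≤ p)
    (a b c : ℚ_[p]) (ha : a ∈ padicExpDomain p) (hb : b ∈ padicExpDomain p)
    (hc : c ∈ padicExpDomain p) :
    ∃! x₀ : ℚ_[p], x₀ ∈ padicExpDomain p ∧ lamMap p a b c x₀ = x₀ := by
  have hp2 : p ≠ 2 := by omega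
  rw [padicExpDomain_eq_image hp] at ha hb hc ⊢
  obtain ⟨a, ha : toZMod a = 1, rfl⟩ := ha
  obtain ⟨b, hb : toZMod b = 1, rfl⟩ := hb
  obtain ⟨c, hc : toZMod c = 1, rfl⟩ := hc
  obtain ⟨z, ⟨hz, hz_root⟩, hz_unique⟩ := existsUnique_root_lamCubic hp2 ha hb hc
  refine ⟨z, ⟨⟨z, hz, rfl⟩, (lamMap_coe_eq_coe_iff hp2 hc hz).2 hz_root⟩, ?_⟩
  rintro _ ⟨⟨y, hy : toZMod y = 1, rfl⟩, hy_fixed⟩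
  exact congrArg _ (hz_unique y ⟨hy, (lamMap_coe_eq_coe_iff hp2 hc hy).1 hy_fixed⟩)

/-- for `p ≥ 3` prime and `a, b, c ∈ ℰ_p` with `|b-1|_p + |c-1|_p ≠ 0`, the map
`g(u) = a(bu²+1)/(u²+c)` has a unique fixed point in `ℰ_p`. -/
theorem lamMap_unique_fixed_point_in_Ep
    (p : ℕ) [Fact p.Prime] (hp : 3 ≤ p)
    (a b c : ℚ_[p]) (ha : a ∈ padicExpDomain p) (hb : b ∈ padicExpDomain p)
    (hc : c ∈ padicExpDomain p) (hbc : ‖b - 1‖ + ‖c - 1‖ ≠ 0) :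
    ∃! x₀ : ℚ_[p], x₀ ∈ padicExpDomain p ∧ lamMap p a b c x₀ = x₀ :=
  lamMap_unique_fixed_point_in_Ep_general p hp a b c ha hb hc
end

section
/- Let p be a prime, k ≥ 2, N a nonzero integer, ρ ∈ ℚ_p with ρ^{2N} ∉ {−1,0,1}, set θ = ρ^{2N}, and let h ∈ ℚ_p be a fixed point of f_θ with h ≠ −1 and ρ^{−N}h + ρ^N ≠ 0. For n ≥ 1 and σ : V_n → Φ define the cylinder value m_n(σ) = ρ^{H_n(σ)} h^{c(σ)} / ((ρ^{−N}h + ρ^N)^{k(k^n−1)/(k−1)} (h + 1)), where c(σ) = card{x ∈ W_n : σ(x) = 1} and H_n(σ) = Σ_{⟨x,y⟩ ∈ L_n} N·σ(x)σ(y). If |ρ|_p ≠ 1, then sup over all n ≥ 1 and all σ : V_n → Φ of |m_n(σ)|_p is finite (the corresponding translation-invariant generalized p-adic Gibbs measure μ_h of the Ising model is bounded). -/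
open scoped BigOperators

lemma geom_aux (k : ℕ) (hk : 1 ≤ k) : ∀ n : ℕ, (k-1) * ∑ i ∈ Finset.range n, k^i = k^n - 1 := by
  intro n
  induction n with
  | zero => simp
  | succ n ih =>
    have h1 : 1 ≤ k ^ n := Nat.one_le_pow _ _ hk
    have h2 : k ^ n ≤ k ^ (n+1) := Nat.pow_le_pow_right hk (by omega)
    rw [Finset.sum_range_succ, Nat.mul_add, ih, Nat.sub_mul, Nat.one_mul, ← pow_succ']
    omega

lemma max_one_pow (x : ℝ) (hx : 0 ≤ x) (n : ℕ) : max x 1 ^ n = max (x^n) 1 := by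
  rcases le_total x 1 with h|h
  · rw [max_eq_right h, max_eq_right (pow_le_one₀ hx h), one_pow]
  · rw [max_eq_left h, max_eq_left (one_le_pow₀ h)]

lemma pow_eq_one_pos {b : ℝ} (hb : 0 < b) {n : ℕ} (hn : n ≠ 0) (h : b ^ n = 1) : b = 1 := by
  rcases lt_trichotomy b 1 with h1|h1|h1
  · exact absurd h (ne_of_lt (pow_lt_one₀ hb.le h1 hn))
  · exact h1
  · exact absurd h (ne_of_gt (one_lt_pow₀ h1 hn))

lemma pow_eq_self_pos {b : ℝ} (hb : 0 < b) {n : ℕ} (hn : 2 ≤ n) (h : b ^ n = b) : b = 1 := by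
  rcases lt_trichotomy b 1 with h1|h1|h1
  · have := pow_lt_pow_right_of_lt_one₀ hb h1 (show 1 < n by omega)
    rw [h, pow_one] at this; exact absurd this (lt_irrefl b)
  · exact h1
  · have : b ^ 1 < b ^ n := pow_lt_pow_right₀ h1 (by omega)
    rw [h, pow_one] at this; exact absurd this (lt_irrefl b)

lemma zpow_finset_sum₀ {K : Type*} [Field K] {x : K} (hx : x ≠ 0) {ι : Type*}
    (s : Finset ι) (f : ι → ℤ) : x ^ (∑ i ∈ s, f i) = ∏ i ∈ s, x ^ f i := by
  induction s using Finset.cons_induction with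
  | empty => simp
  | cons a s ha ih => rw [Finset.sum_cons, Finset.prod_cons, zpow_add₀ hx, ih]

lemma key_ineq (k : ℕ) (hk : 2 ≤ k) (a b u v : ℝ)
    (ha : 0 < a) (ha1 : a ≠ 1) (hb : 0 < b) (hu : 0 < u) (hv : 0 ≤ v)
    (H1 : u ^ k * b = v ^ k)
    (H2 : a^2 * b ≠ 1 → v = max (a^2 * b) 1) (H2' : v ≤ max (a^2 * b) 1)
    (H3 : b ≠ a^2 → u = max b (a^2)) (H3' : u ≤ max b (a^2)) :
    max b 1 ^ (k-1) * max (a^2) 1 ^ k ≤ u ^ k := by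
  set A := a^2 with hA_def
  have hA : 0 < A := by positivity
  have hA1 : A ≠ 1 := by
    intro hA1
    apply ha1
    nlinarith [sq_nonneg (a - 1), sq_nonneg (a + 1)]
  have hk0 : k ≠ 0 := by omega
  rcases lt_trichotomy (A * b) 1 with hAb | hAb | hAb
  · -- A*b < 1 : v = 1
    have hv1 : v = 1 := by rw [H2 (ne_of_lt hAb), max_eq_right hAb.le]
    rw [hv1, one_pow] at H1
    rcases lt_trichotomy b A with hbA | hbA | hbA
    · -- b < A: u = A, b = A^(-k), A > 1
      have hu' : u = A := by rw [H3 (ne_of_lt hbA), max_eq_right hbA.le]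
      rw [hu'] at H1 ⊢
      -- A^k * b = 1 and A*b < 1 → A < A^k → A > 1
      have hAltAk : A < A ^ k := by
        have : A * b < A ^ k * b := by linarith
        exact lt_of_mul_lt_mul_right this hb.le
      have hA1' : 1 < A := by
        by_contra hcon
        push_neg at hcon
        have : A ^ k ≤ A := by
          calc A ^ k ≤ A ^ 1 := pow_le_pow_of_le_one hA.le hcon (by omega)
          _ = A := pow_one A
        linarith
      have hb1 : b ≤ 1 := by
        have : 1 < A ^ k := one_lt_pow₀ hA1' hk0
        nlinarith
      rw [max_eq_right hb1, one_pow, one_mul, max_eq_left hA1'.le]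
    · -- b = A: contradiction
      exfalso
      have hAlt1 : A < 1 := by
        rcases lt_or_gt_of_ne hA1 with h1|h1
        · exact h1
        · exfalso; rw [hbA] at hAb; nlinarith
      have hu1 : u ≤ A := by rw [hbA] at H3'; simpa using H3'
      rw [hbA] at H1
      have hp := pow_le_pow_left₀ hu.le hu1 k
      have h4 : (1:ℝ) ≤ A ^ k * A := by nlinarith
      have h5 : A ^ (k+1) < 1 := pow_lt_one₀ hA.le hAlt1 (by omega)
      rw [pow_succ] at h5
      linarith
    · -- A < b: u = b, b^(k+1) = 1 → b = 1, A < 1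
      have hu' : u = b := by rw [H3 (ne_of_gt hbA), max_eq_left hbA.le]
      rw [hu'] at H1 ⊢
      have hb1 : b = 1 := by
        apply pow_eq_one_pos hb (n := k+1) (by omega)
        rw [pow_succ]; exact H1
      have hA1' : A < 1 := by rw [hb1] at hbA; exact hbA
      rw [hb1, max_self, one_pow, one_pow, max_eq_right hA1'.le, one_pow, one_mul]
  · -- A*b = 1 : contradiction
    exfalso
    have hbne : b ≠ A := by
      intro hcon
      rw [hcon] at hAb
      exact hA1 (pow_eq_one_pos hA (n := 2) (by omega) (by nlinarith))
    have hu' : u = max b A := H3 hbne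
    have hvle : v ≤ 1 := by rw [hAb] at H2'; simpa using H2'
    have hvk : v ^ k ≤ 1 := pow_le_one₀ hv hvle
    have huk : u ^ k * b ≤ 1 := by rw [H1]; exact hvk
    rcases lt_or_gt_of_ne hA1 with h1|h1
    · -- A < 1: b = 1/A > 1, u ≥ b > 1
      have hbgt : 1 < b := by nlinarith
      have hub : b ≤ u := by rw [hu']; exact le_max_left _ _
      have : 1 < u ^ k := one_lt_pow₀ (lt_of_lt_of_le hbgt hub) hk0
      nlinarith
    · -- A > 1: u ≥ A, u^k ≥ A^k > A = 1/b, so u^k * b > 1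
      have huA : A ≤ u := by rw [hu']; exact le_max_right _ _
      have h2 : A ^ k ≤ u ^ k := pow_le_pow_left₀ hA.le huA k
      have h3 : A < A ^ k := by
        calc A = A ^ 1 := (pow_one A).symm
        _ < A ^ k := pow_lt_pow_right₀ h1 (by omega)
      have : A < u ^ k := lt_of_lt_of_le h3 h2
      nlinarith
  · -- 1 < A*b : v = A*b
    have hv1 : v = A * b := by rw [H2 (ne_of_gt hAb), max_eq_left hAb.le]
    rw [hv1, mul_pow] at H1
    rcases lt_trichotomy b A with hbA | hbA | hbA
    · -- b < A: u = A, b^k = b → b = 1, A > 1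
      have hu' : u = A := by rw [H3 (ne_of_lt hbA), max_eq_right hbA.le]
      rw [hu'] at H1 ⊢
      have hbk : b = b ^ k := by
        have hAk : (0:ℝ) < A ^ k := pow_pos hA k
        exact mul_left_cancel₀ (ne_of_gt hAk) H1
      have hb1 : b = 1 := pow_eq_self_pos hb hk hbk.symm
      have hA1' : 1 < A := by rw [hb1, mul_one] at hAb; exact hAb
      rw [hb1, max_self, one_pow, one_mul, max_eq_left hA1'.le]
    · -- b = A: contradiction, A > 1 and u ≤ A gives A^{2k} ≤ A^{k+1}
      exfalso
      have hA1' : 1 < A := by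
        rcases lt_or_gt_of_ne hA1 with h1|h1
        · exfalso; rw [hbA] at hAb; nlinarith
        · exact h1
      have hu1 : u ≤ A := by rw [hbA] at H3'; simpa using H3'
      have hAk : (0:ℝ) < A ^ k := pow_pos hA k
      have h3 : A ^ k * A ^ k ≤ A ^ k * A := by
        have hp := pow_le_pow_left₀ hu.le hu1 k
        calc A ^ k * A ^ k = u ^ k * b := by rw [H1, hbA]
        _ ≤ A ^ k * b := by nlinarith
        _ = A ^ k * A := by rw [hbA]
      have h4 : A ^ k ≤ A := le_of_mul_le_mul_left h3 hAk
      have h5 : A ^ 1 < A ^ k := pow_lt_pow_right₀ hA1' (by omega)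
      rw [pow_one] at h5
      linarith
    · -- A < b: u = b, b = A^k, A > 1
      have hu' : u = b := by rw [H3 (ne_of_gt hbA), max_eq_left hbA.le]
      rw [hu'] at H1 ⊢
      have hbAk : b = A ^ k := by
        have hbk : (0:ℝ) < b ^ k := pow_pos hb k
        have : b ^ k * b = b ^ k * A ^ k := by linarith [H1]
        exact mul_left_cancel₀ (ne_of_gt hbk) this
      have hA1' : 1 < A := by
        by_contra hcon
        push_neg at hcon
        have : A ^ k ≤ A := by
          calc A ^ k ≤ A ^ 1 := pow_le_pow_of_le_one hA.le hcon (by omega)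
          _ = A := pow_one A
        rw [← hbAk] at this
        linarith
      have hb1 : 1 < b := lt_trans hA1' hbA
      rw [max_eq_left hb1.le, max_eq_left hA1'.le]
      refine le_of_eq ?_
      calc b ^ (k-1) * A ^ k = b ^ (k-1) * b := by rw [← hbAk]
      _ = b ^ (k-1+1) := (pow_succ b (k-1)).symm
      _ = b ^ k := by congr 1; omega


/-- The vertices of `V_n` of the Cayley tree of order `k`: words of length `≤ n` over
`{1,…,k}` (a word of length `m` is encoded as `Fin m → Fin k`; the root is the empty word). -/
abbrev CayleyVertexLE (k n : ℕ) := Σ m : Fin (n + 1), Fin (m : ℕ) → Fin k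

/-- Spin values: configurations take values in `Φ = {-1, 1} ⊆ ℤ`, encoded by `Bool`. -/
def spinValue (b : Bool) : ℤ := if b then 1 else -1

/-- The Ising Hamiltonian `H_n(σ) = Σ_{⟨x,y⟩ ∈ L_n} N·σ(x)σ(y)`: the sum runs over all edges
`⟨x, x·i⟩` with both endpoints in `V_n`. -/
def isingHam (k : ℕ) (N : ℤ) (n : ℕ) (σ : CayleyVertexLE k n → Bool) : ℤ :=
  ∑ m : Fin n, ∑ f : Fin ((m : ℕ) + 1) → Fin k,
    N * spinValue (σ ⟨⟨(m : ℕ), Nat.lt_succ_of_lt m.2⟩, fun i => f i.castSucc⟩) *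
      spinValue (σ ⟨⟨(m : ℕ) + 1, Nat.succ_lt_succ m.2⟩, f⟩)

/-- `c(σ) = card{x ∈ W_n : σ(x) = 1}`. -/
def bdryPlusCount (k n : ℕ) (σ : CayleyVertexLE k n → Bool) : ℕ :=
  (Finset.univ.filter fun f : Fin n → Fin k =>
    σ ⟨⟨n, Nat.lt_succ_self n⟩, f⟩ = true).card

/-- The cylinder value
`m_n(σ) = ρ^{H_n(σ)} h^{c(σ)} / ((ρ^{-N}h + ρ^N)^{k(k^n-1)/(k-1)} (h + 1))` of the
translation-invariant generalized `p`-adic Gibbs measure `μ_h` of the Ising model. -/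
noncomputable def cylinderValue (p k : ℕ) [Fact p.Prime] (N : ℤ) (ρ h : ℚ_[p]) (n : ℕ)
    (σ : CayleyVertexLE k n → Bool) : ℚ_[p] :=
  ρ ^ isingHam k N n σ * h ^ bdryPlusCount k n σ /
    ((ρ ^ (-N) * h + ρ ^ N) ^ (k * (k ^ n - 1) / (k - 1)) * (h + 1))

/-- if `|ρ|_p ≠ 1`, then the translation-invariant generalized `p`-adic Gibbs
measure `μ_h` of the Ising model associated to a fixed point `h ≠ -1` of `f_θ`, `θ = ρ^{2N}`,
is bounded. -/
theorem ising_measure_bounded_of_norm_ne_one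
    (p : ℕ) [Fact p.Prime] (k : ℕ) (hk : 2 ≤ k) (N : ℤ) (hN : N ≠ 0)
    (ρ : ℚ_[p]) (hρ : ρ ^ (2 * N) ≠ -1 ∧ ρ ^ (2 * N) ≠ 0 ∧ ρ ^ (2 * N) ≠ 1)
    (h : ℚ_[p]) (hfix : h ≠ -(ρ ^ (2 * N)) ∧
      ((ρ ^ (2 * N) * h + 1) / (h + ρ ^ (2 * N))) ^ k = h)
    (hne : h ≠ -1) (hdenom : ρ ^ (-N) * h + ρ ^ N ≠ 0)
    (hnorm : ‖ρ‖ ≠ 1) :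
    ∃ M : ℝ, ∀ n : ℕ, 1 ≤ n → ∀ σ : CayleyVertexLE k n → Bool,
      ‖cylinderValue p k N ρ h n σ‖ ≤ M := by
  obtain ⟨hθ1, hθ0, hθ1'⟩ := hρ
  obtain ⟨hfix1, hfix2⟩ := hfix
  have hρ0 : ρ ≠ 0 := by
    intro hc; rw [hc] at hθ0; exact hθ0 (zero_zpow _ (by omega))
  have hh1 : h + 1 ≠ 0 := fun hc => hne (eq_neg_of_add_eq_zero_left hc)
  have hsum0 : h + ρ ^ (2 * N) ≠ 0 := fun hc => hfix1 (eq_neg_of_add_eq_zero_left hc)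
  set a : ℝ := ‖ρ ^ N‖ with ha_def
  have ha : 0 < a := norm_pos_iff.mpr (zpow_ne_zero _ hρ0)
  have hθnorm : ‖ρ ^ (2 * N)‖ = a ^ 2 := by
    rw [show (2 : ℤ) * N = N + N by ring, zpow_add₀ hρ0, norm_mul, sq]
  have ha1 : a ≠ 1 := by
    intro hc
    apply hnorm
    rw [ha_def, norm_zpow] at hc
    have hρpos : 0 < ‖ρ‖ := norm_pos_iff.mpr hρ0
    have habs : ‖ρ‖ ^ (N.natAbs) = 1 := by
      rcases Int.natAbs_eq N with hN' | hN'
      · rw [← zpow_natCast, ← hN', hc]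
      · have hNn : ((N.natAbs : ℤ)) = -N := by omega
        rw [← zpow_natCast, hNn, zpow_neg, hc, inv_one]
    exact pow_eq_one_pos hρpos (Int.natAbs_ne_zero.mpr hN) habs
  have hh0 : h ≠ 0 := by
    intro hc
    rw [hc, mul_zero, zero_add, zero_add] at hfix2
    exact pow_ne_zero _ (one_div_ne_zero hθ0) hfix2
  set b : ℝ := ‖h‖ with hb_def
  have hb : 0 < b := norm_pos_iff.mpr hh0
  set u : ℝ := ‖h + ρ ^ (2 * N)‖ with hu_def
  have hu : 0 < u := norm_pos_iff.mpr hsum0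
  set v : ℝ := ‖ρ ^ (2 * N) * h + 1‖ with hv_def
  have hv : (0:ℝ) ≤ v := norm_nonneg _
  have hfe : (ρ ^ (2 * N) * h + 1) ^ k = h * (h + ρ ^ (2 * N)) ^ k := by
    rw [div_pow, div_eq_iff (pow_ne_zero _ hsum0)] at hfix2
    exact hfix2
  have H1 : u ^ k * b = v ^ k := by
    have := congrArg (fun z : ℚ_[p] => ‖z‖) hfe
    simp only [norm_pow, norm_mul] at this
    rw [← hv_def, ← hb_def, ← hu_def] at this
    rw [this]; ring
  have hθh : ‖ρ ^ (2 * N) * h‖ = a ^ 2 * b := by rw [norm_mul, hθnorm]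
  have H2 : a ^ 2 * b ≠ 1 → v = max (a ^ 2 * b) 1 := by
    intro hne'
    rw [hv_def, Padic.add_eq_max_of_ne (by rw [hθh, norm_one]; exact hne'), hθh, norm_one]
  have H2' : v ≤ max (a ^ 2 * b) 1 := by
    rw [hv_def]
    calc ‖ρ ^ (2 * N) * h + 1‖ ≤ max ‖ρ ^ (2 * N) * h‖ ‖(1 : ℚ_[p])‖ :=
          Padic.nonarchimedean _ _
    _ = max (a ^ 2 * b) 1 := by rw [hθh, norm_one]
  have H3 : b ≠ a ^ 2 → u = max b (a ^ 2) := by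
    intro hne'
    rw [hu_def, Padic.add_eq_max_of_ne (by rw [hθnorm, ← hb_def]; exact hne'), hθnorm]
  have H3' : u ≤ max b (a ^ 2) := by
    rw [hu_def]
    calc ‖h + ρ ^ (2 * N)‖ ≤ max ‖h‖ ‖ρ ^ (2 * N)‖ := Padic.nonarchimedean _ _
    _ = max b (a ^ 2) := by rw [hθnorm]
  have KU : max b 1 ^ (k - 1) * max (a ^ 2) 1 ^ k ≤ u ^ k :=
    key_ineq k hk a b u v ha ha1 hb hu hv H1 H2 H2' H3 H3'
  set B : ℝ := max b 1 with hB_def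
  set P : ℝ := max (a ^ 2) 1 with hP_def
  have hB0 : (0:ℝ) < B := lt_of_lt_of_le one_pos (le_max_right _ _)
  have hB1 : (1:ℝ) ≤ B := le_max_right _ _
  have hP1 : (1:ℝ) ≤ P := le_max_right _ _
  have hP0 : (0:ℝ) < P := lt_of_lt_of_le one_pos hP1
  have hh1n : (0:ℝ) < ‖h + 1‖ := norm_pos_iff.mpr hh1
  refine ⟨B / ‖h + 1‖, ?_⟩
  intro n hn σ
  set e : ℕ := ∑ i ∈ Finset.range n, k ^ i with he_def
  have hgeom : (k - 1) * e = k ^ n - 1 := geom_aux k (by omega) n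
  have hE' : k * (k ^ n - 1) / (k - 1) = k * e := by
    rw [← hgeom, ← mul_assoc, mul_comm k (k - 1), mul_assoc,
      Nat.mul_div_cancel_left _ (show 0 < k - 1 by omega)]
  -- the Hamiltonian bound
  have hterm : ∀ s s' : Bool, ‖ρ ^ (N * spinValue s * spinValue s' + N)‖ ≤ P := by
    have h2N : ‖ρ ^ (2 * N)‖ ≤ P := by rw [hθnorm]; exact le_max_left _ _
    have h0 : ‖ρ ^ (0:ℤ)‖ ≤ P := by
      rw [zpow_zero, norm_one]; exact le_max_right _ _
    intro s s'
    cases s <;> cases s' <;> simp only [spinValue, Bool.false_eq_true, if_true, if_false]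
    · rw [show N * -1 * -1 + N = 2 * N by ring]; exact h2N
    · rw [show N * -1 * 1 + N = 0 by ring]; exact h0
    · rw [show N * 1 * -1 + N = 0 by ring]; exact h0
    · rw [show N * 1 * 1 + N = 2 * N by ring]; exact h2N
  have hcard : ∀ m : Fin n,
      (Finset.univ : Finset (Fin ((m:ℕ)+1) → Fin k)).card = k ^ ((m:ℕ)+1) := by
    intro m
    rw [Finset.card_univ, Fintype.card_fun]
    simp
  have hEsum : ∑ m : Fin n, (k:ℤ) ^ ((m:ℕ)+1) = ((k * e : ℕ) : ℤ) := by
    rw [he_def]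
    push_cast
    rw [Fin.sum_univ_eq_sum_range (fun i => (k:ℤ) ^ (i+1)) n, Finset.mul_sum]
    exact Finset.sum_congr rfl fun i _ => pow_succ' (k:ℤ) i
  have hHsum : isingHam k N n σ + N * ((k * e : ℕ) : ℤ) =
      ∑ m : Fin n, ∑ f : Fin ((m : ℕ) + 1) → Fin k,
        (N * spinValue (σ ⟨⟨(m : ℕ), Nat.lt_succ_of_lt m.2⟩, fun i => f i.castSucc⟩) *
          spinValue (σ ⟨⟨(m : ℕ) + 1, Nat.succ_lt_succ m.2⟩, f⟩) + N) := by
    rw [isingHam, ← hEsum, Finset.mul_sum, ← Finset.sum_add_distrib]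
    apply Finset.sum_congr rfl
    intro m _
    rw [Finset.sum_add_distrib]
    congr 1
    rw [Finset.sum_const, hcard m, nsmul_eq_mul]
    push_cast
    ring
  have keysum : ‖ρ ^ (isingHam k N n σ + N * ((k * e : ℕ) : ℤ))‖ ≤ P ^ (k * e) := by
    rw [hHsum, zpow_finset_sum₀ hρ0]
    calc ‖∏ m : Fin n, ρ ^ (∑ f : Fin ((m : ℕ) + 1) → Fin k,
          (N * spinValue (σ ⟨⟨(m : ℕ), Nat.lt_succ_of_lt m.2⟩, fun i => f i.castSucc⟩) *
            spinValue (σ ⟨⟨(m : ℕ) + 1, Nat.succ_lt_succ m.2⟩, f⟩) + N))‖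
        = ∏ m : Fin n, ∏ f : Fin ((m : ℕ) + 1) → Fin k,
            ‖ρ ^ (N * spinValue (σ ⟨⟨(m : ℕ), Nat.lt_succ_of_lt m.2⟩, fun i => f i.castSucc⟩) *
              spinValue (σ ⟨⟨(m : ℕ) + 1, Nat.succ_lt_succ m.2⟩, f⟩) + N)‖ := by
          rw [norm_prod]
          apply Finset.prod_congr rfl
          intro m _
          rw [zpow_finset_sum₀ hρ0, norm_prod]
      _ ≤ ∏ m : Fin n, ∏ _f : Fin ((m : ℕ) + 1) → Fin k, P := by
          apply Finset.prod_le_prod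
          · intro m _; positivity
          · intro m _
            apply Finset.prod_le_prod
            · intro f _; positivity
            · intro f _; exact hterm _ _
      _ = P ^ (k * e) := by
          have hc : ∀ m : Fin n, ∏ _f : Fin ((m : ℕ) + 1) → Fin k, P = P ^ (k ^ ((m:ℕ)+1)) := by
            intro m; rw [Finset.prod_const, hcard m]
          rw [Finset.prod_congr rfl fun m _ => hc m, Finset.prod_pow_eq_pow_sum]
          congr 1
          have := hEsum
          rw [he_def] at this ⊢
          exact_mod_cast this
  have hnum : ‖ρ ^ isingHam k N n σ‖ * a ^ (k * e) ≤ P ^ (k * e) := by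
    calc ‖ρ ^ isingHam k N n σ‖ * a ^ (k * e)
        = ‖ρ ^ (isingHam k N n σ + N * ((k * e : ℕ) : ℤ))‖ := by
          rw [zpow_add₀ hρ0, norm_mul, zpow_mul, zpow_natCast, norm_pow, ha_def]
      _ ≤ P ^ (k * e) := keysum
  -- c bound
  have hcbound : bdryPlusCount k n σ ≤ k ^ n := by
    calc bdryPlusCount k n σ ≤ (Finset.univ : Finset (Fin n → Fin k)).card :=
          Finset.card_filter_le _ _
    _ = k ^ n := by rw [Finset.card_univ, Fintype.card_fun]; simp
  -- denominator norm
  have hwnorm : ‖ρ ^ (-N) * h + ρ ^ N‖ = a⁻¹ * u := by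
    have hrr : ρ ^ (-N) * (ρ ^ (2 * N)) = ρ ^ N := by
      rw [← zpow_add₀ hρ0]; congr 1; ring
    have hw : ρ ^ (-N) * h + ρ ^ N = ρ ^ (-N) * (h + ρ ^ (2 * N)) := by
      rw [mul_add, hrr]
    rw [hw, norm_mul, zpow_neg, norm_inv, ← ha_def, ← hu_def]
  -- assemble
  rw [cylinderValue, norm_div, norm_mul, norm_mul, norm_pow, norm_pow, hwnorm, hE',
    ← hb_def]
  rw [div_le_div_iff₀ (by positivity) hh1n]
  have hsplit : (a⁻¹ * u) ^ (k * e) = u ^ (k * e) / a ^ (k * e) := by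
    rw [mul_pow, inv_pow, inv_mul_eq_div]
  have hkn1 : 1 ≤ k ^ n := Nat.one_le_pow n k (Nat.lt_of_lt_of_le Nat.zero_lt_two hk)
  have hUE : B ^ (k ^ n - 1) * P ^ (k * e) ≤ u ^ (k * e) := by
    have h3 := pow_le_pow_left₀ (by positivity) KU e
    rw [mul_pow, ← pow_mul, ← pow_mul, ← pow_mul, hgeom] at h3
    exact h3
  have hbc : b ^ bdryPlusCount k n σ ≤ B ^ (k ^ n) := by
    calc b ^ bdryPlusCount k n σ ≤ B ^ bdryPlusCount k n σ :=
          pow_le_pow_left₀ hb.le (le_max_left _ _) _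
    _ ≤ B ^ (k ^ n) := pow_le_pow_right₀ hB1 hcbound
  have hBsplit : B ^ (k ^ n) = B * B ^ (k ^ n - 1) := by
    rw [← pow_succ', Nat.sub_add_cancel hkn1]
  have hmain : ‖ρ ^ isingHam k N n σ‖ * b ^ bdryPlusCount k n σ * a ^ (k * e) ≤
      B * u ^ (k * e) := by
    calc ‖ρ ^ isingHam k N n σ‖ * b ^ bdryPlusCount k n σ * a ^ (k * e)
        = (‖ρ ^ isingHam k N n σ‖ * a ^ (k * e)) * b ^ bdryPlusCount k n σ := by ring
      _ ≤ P ^ (k * e) * B ^ (k ^ n) := by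
          apply mul_le_mul hnum hbc (by positivity) (by positivity)
      _ = B * (B ^ (k ^ n - 1) * P ^ (k * e)) := by rw [hBsplit]; ring
      _ ≤ B * u ^ (k * e) := by
          exact mul_le_mul_of_nonneg_left hUE hB0.le
  calc ‖ρ ^ isingHam k N n σ‖ * b ^ bdryPlusCount k n σ * ‖h + 1‖
      = (‖ρ ^ isingHam k N n σ‖ * b ^ bdryPlusCount k n σ) * ‖h + 1‖ := by ring
    _ ≤ (B * u ^ (k * e) / a ^ (k * e)) * ‖h + 1‖ := by
        apply mul_le_mul_of_nonneg_right _ hh1n.le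
        rw [le_div_iff₀ (by positivity)]
        exact hmain
    _ = B * ((a⁻¹ * u) ^ (k * e) * ‖h + 1‖) := by rw [hsplit]; ring
end

section
/- Let p be a prime, k ≥ 2, N a nonzero integer, ρ ∈ ℚ_p with ρ^{2N} ∉ {−1,0,1} and |ρ|_p = 1, set θ = ρ^{2N}, and let h ∈ ℚ_p be a fixed point of f_θ with h ≠ −1 and ρ^{−N}h + ρ^N ≠ 0. For n ≥ 1 and σ : V_n → Φ define m_n(σ) = ρ^{H_n(σ)} h^{c(σ)} / ((ρ^{−N}h + ρ^N)^{k(k^n−1)/(k−1)} (h + 1)), where c(σ) = card{x ∈ W_n : σ(x) = 1} and H_n(σ) = Σ_{⟨x,y⟩ ∈ L_n} N·σ(x)σ(y). Then the set {|m_n(σ)|_p : n ≥ 1, σ : V_n → Φ} is unbounded if and only if 0 < |h + ρ^{2N}|_p < 1. -/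
open scoped BigOperators

/-!
If `|ρ|_p = 1`, the factor `ρ^{H_n(σ)}` is a unit and `|ρ^{-N}h + ρ^N|_p = |h + θ|_p`, so
`|m_n(σ)|_p = |h|_p^{c(σ)} / (|h + θ|_p^{k(k^n-1)/(k-1)} |h + 1|_p)`. A fixed point of `f_θ`
satisfies `|h|_p ≤ 1` (otherwise `|f_θ(h)|_p = 1`), so the numerator is at most `1`: for
`|h + θ|_p ≥ 1` the values are bounded by `|h + 1|_p⁻¹`, while for `|h + θ|_p < 1` the
all-minus configurations already make them blow up, the exponent growing at least like `n`.
-/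

open Filter

def isingPottsMap {K : Type*} [Field K] (θ : K) (k : ℕ) (x : K) : K :=
  ((θ * x + 1) / (x + θ)) ^ k

theorem norm_le_one_of_isFixedPt_isingPottsMap {K : Type*} [NormedField K] [IsUltrametricDist K]
    {θ h : K} {k : ℕ} (hθ : ‖θ‖ = 1) (hfix : Function.IsFixedPt (isingPottsMap θ k) h) :
    ‖h‖ ≤ 1 := by
  by_contra! hlt
  have hnum : ‖θ * h + 1‖ = ‖h‖ := by
    rw [IsUltrametricDist.norm_add_eq_max_of_norm_ne_norm] <;>
      simp [norm_mul, hθ, hlt.le, hlt.ne']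
  have hden : ‖h + θ‖ = ‖h‖ := by
    rw [IsUltrametricDist.norm_add_eq_max_of_norm_ne_norm] <;> simp [hθ, hlt.le, hlt.ne']
  have : ‖h‖ = 1 := by
    rw [← hfix.eq, isingPottsMap, norm_pow, norm_div, hnum, hden,
      div_self (by positivity), one_pow]
  exact hlt.ne' this

theorem le_mul_pow_sub_one_div {k : ℕ} (hk : 2 ≤ k) (n : ℕ) :
    n ≤ k * (k ^ n - 1) / (k - 1) := by
  have hn : n ≤ k ^ n - 1 := Nat.le_sub_one_of_lt (Nat.lt_pow_self (by omega))
  rw [Nat.le_div_iff_mul_le (by omega), mul_comm k]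
  exact Nat.mul_le_mul hn (Nat.sub_le k 1)

section CylinderValue

variable {p : ℕ} [Fact p.Prime] {k : ℕ} {N : ℤ} {ρ h : ℚ_[p]}

theorem norm_cylinderValue (hρ : ‖ρ‖ = 1) (n : ℕ) (σ : CayleyVertexLE k n → Bool) :
    ‖cylinderValue p k N ρ h n σ‖ =
      ‖h‖ ^ bdryPlusCount k n σ /
        (‖h + ρ ^ (2 * N)‖ ^ (k * (k ^ n - 1) / (k - 1)) * ‖h + 1‖) := by
  have hρ0 : ρ ≠ 0 := norm_ne_zero_iff.mp (by rw [hρ]; exact one_ne_zero)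
  have hfactor : ρ ^ (-N) * h + ρ ^ N = ρ ^ (-N) * (h + ρ ^ (2 * N)) := by
    rw [mul_add, ← zpow_add₀ hρ0]
    ring_nf
  rw [cylinderValue, hfactor]
  simp only [norm_div, norm_mul, norm_pow, norm_zpow, hρ, one_zpow, one_mul, mul_pow, one_pow]

theorem norm_cylinderValue_le (hρ : ‖ρ‖ = 1) (hh : ‖h‖ ≤ 1) (hθ : 1 ≤ ‖h + ρ ^ (2 * N)‖)
    (n : ℕ) (σ : CayleyVertexLE k n → Bool) :
    ‖cylinderValue p k N ρ h n σ‖ ≤ ‖h + 1‖⁻¹ := by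
  rw [norm_cylinderValue hρ, div_mul_eq_div_div, div_eq_mul_inv _ ‖h + 1‖]
  refine mul_le_of_le_one_left (inv_nonneg.mpr (norm_nonneg _)) (div_le_one_of_le₀ ?_ ?_)
  · exact (pow_le_one₀ (norm_nonneg _) hh).trans (one_le_pow₀ hθ)
  · positivity

theorem tendsto_norm_cylinderValue_allMinus (hk : 2 ≤ k) (hρ : ‖ρ‖ = 1)
    (hθ₀ : 0 < ‖h + ρ ^ (2 * N)‖) (hθ₁ : ‖h + ρ ^ (2 * N)‖ < 1) (hh : 0 < ‖h + 1‖) :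
    Tendsto (fun n => ‖cylinderValue p k N ρ h n fun _ => false‖) atTop atTop := by
  have hvalue (n : ℕ) : ‖cylinderValue p k N ρ h n fun _ => false‖ =
      ‖h + ρ ^ (2 * N)‖⁻¹ ^ (k * (k ^ n - 1) / (k - 1)) / ‖h + 1‖ := by
    simp [norm_cylinderValue hρ, bdryPlusCount, div_mul_eq_div_div, inv_pow]
  have hexp : Tendsto (fun n => k * (k ^ n - 1) / (k - 1)) atTop atTop :=
    tendsto_atTop_mono (le_mul_pow_sub_one_div hk) tendsto_id
  simp only [hvalue]
  exact ((tendsto_pow_atTop_atTop_of_one_lt ((one_lt_inv₀ hθ₀).mpr hθ₁)).comp hexp).atTop_div_const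
    hh

end CylinderValue

theorem ising_measure_unbounded_iff_general
    (p : ℕ) [Fact p.Prime] (k : ℕ) (hk : 2 ≤ k) (N : ℤ)
    (ρ : ℚ_[p])
    (hρnorm : ‖ρ‖ = 1)
    (h : ℚ_[p]) (hfix : h ≠ -(ρ ^ (2 * N)) ∧
      ((ρ ^ (2 * N) * h + 1) / (h + ρ ^ (2 * N))) ^ k = h)
    (hne : h ≠ -1) :
    (∀ M : ℝ, ∃ n : ℕ, 1 ≤ n ∧ ∃ σ : CayleyVertexLE k n → Bool,
        M < ‖cylinderValue p k N ρ h n σ‖) ↔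
      (0 < ‖h + ρ ^ (2 * N)‖ ∧ ‖h + ρ ^ (2 * N)‖ < 1) := by
  obtain ⟨hθ, hfp⟩ := hfix
  have hθnorm : ‖ρ ^ (2 * N)‖ = 1 := by rw [norm_zpow, hρnorm, one_zpow]
  have hh : ‖h‖ ≤ 1 := norm_le_one_of_isFixedPt_isingPottsMap hθnorm hfp
  have hθ₀ : 0 < ‖h + ρ ^ (2 * N)‖ := norm_pos_iff.mpr (by rwa [Ne, add_eq_zero_iff_eq_neg])
  have hh₀ : 0 < ‖h + 1‖ := norm_pos_iff.mpr (by rwa [Ne, add_eq_zero_iff_eq_neg])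
  refine ⟨fun hunbdd => ⟨hθ₀, ?_⟩, fun ⟨_, hθ₁⟩ M => ?_⟩
  · by_contra! hθ₁
    obtain ⟨n, -, σ, hM⟩ := hunbdd ‖h + 1‖⁻¹
    exact hM.not_ge (norm_cylinderValue_le hρnorm hh hθ₁ n σ)
  · obtain ⟨n, hM, hn⟩ := (((tendsto_norm_cylinderValue_allMinus hk hρnorm hθ₀ hθ₁
      hh₀).eventually_gt_atTop M).and (eventually_ge_atTop 1)).exists
    exact ⟨n, hn, _, hM⟩

/-- if `|ρ|_p = 1`, then the translation-invariant generalized `p`-adic Gibbs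
measure `μ_h` of the Ising model associated to a fixed point `h ≠ -1` of `f_θ`, `θ = ρ^{2N}`,
is unbounded if and only if `0 < |h + ρ^{2N}|_p < 1`. -/
theorem ising_measure_unbounded_iff
    (p : ℕ) [Fact p.Prime] (k : ℕ) (hk : 2 ≤ k) (N : ℤ) (hN : N ≠ 0)
    (ρ : ℚ_[p]) (hρ : ρ ^ (2 * N) ≠ -1 ∧ ρ ^ (2 * N) ≠ 0 ∧ ρ ^ (2 * N) ≠ 1)
    (hρnorm : ‖ρ‖ = 1)
    (h : ℚ_[p]) (hfix : h ≠ -(ρ ^ (2 * N)) ∧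
      ((ρ ^ (2 * N) * h + 1) / (h + ρ ^ (2 * N))) ^ k = h)
    (hne : h ≠ -1) (hdenom : ρ ^ (-N) * h + ρ ^ N ≠ 0) :
    (∀ M : ℝ, ∃ n : ℕ, 1 ≤ n ∧ ∃ σ : CayleyVertexLE k n → Bool,
        M < ‖cylinderValue p k N ρ h n σ‖) ↔
      (0 < ‖h + ρ ^ (2 * N)‖ ∧ ‖h + ρ ^ (2 * N)‖ < 1) :=
  ising_measure_unbounded_iff_general p k hk N ρ hρnorm h hfix hne
end
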